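/- arXiv:1208.3371 — 6 statements merged into one kernel-verified Lean document; each statement's English description precedes it below -/
import Mathlib

section
/- Let (aₙ) be a positive strictly increasing sequence, (pₙ) positive integers, and define g(r) = r³ ∏_{aₘ ≤ r} (1 + r/aₘ)^(2pₘ) for r ≥ a₁, g(r) = r³ otherwise, with aₘ ≥ aₘ₋₁² ≥ 16 for all m. Let r > 1, 0 < s < 1/2, t > 1, and suppose no aₙ lies in the interval (r^s, r^t]. Then log g(r^t) ≤ t(1 + 2s) · log g(r). -/
/-- Upper bound on the growth of g on gaps of the zero set (Lemma 3.5). -/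
theorem stmt6 (a : ℕ → ℝ) (p : ℕ → ℕ) (g : ℝ → ℝ)
    (ha : ∀ n, 0 < a n) (hmono : StrictMono a) (hp : ∀ n, 0 < p n)
    (hsq : ∀ n, (a n)^2 ≤ a (n+1)) (h16 : ∀ n, 16 ≤ (a n)^2)
    (hg : ∀ r : ℝ, g r =
      r^3 * ∏' n : ℕ, if a n ≤ r then (1 + r / a n) ^ (2 * p n) else 1)
    (r s t : ℝ) (hr : 1 < r) (hs : 0 < s) (hs2 : s < 1/2) (ht : 1 < t)
    (hgap : ∀ n, a n ∉ Set.Ioc (r ^ s) (r ^ t)) :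
    Real.log (g (r ^ t)) ≤ t * (1 + 2 * s) * Real.log (g r) := by
  have hr0 : (0:ℝ) < r := by linarith
  have ha4 : ∀ n, (4:ℝ) ≤ a n := fun n => by nlinarith [h16 n, ha n]
  have han : ∀ n : ℕ, (n:ℝ) ≤ a n := by
    intro n
    induction n with
    | zero => simpa using (by linarith [ha4 0] : (0:ℝ) ≤ a 0)
    | succ k ih =>
      have h1 := hsq k; have h2 := ha4 k
      push_cast; nlinarith
  have hL : 0 < Real.log r := Real.log_pos hr
  have hst : s < t := by linarith
  have hrsrt : r ^ s < r ^ t := Real.rpow_lt_rpow_left_iff hr |>.mpr hst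
  have hrsr : r ^ s < r := by
    have : r ^ s < r ^ (1:ℝ) := Real.rpow_lt_rpow_left_iff hr |>.mpr (by linarith)
    simpa using this
  have hrrt : r < r ^ t := by
    have : r ^ (1:ℝ) < r ^ t := Real.rpow_lt_rpow_left_iff hr |>.mpr ht
    simpa using this
  have hrt0 : (0:ℝ) < r ^ t := Real.rpow_pos_of_pos hr0 t
  set N := ⌈r ^ t⌉₊ + 1 with hNdef
  have hN : ∀ n, n ∉ Finset.range N → r ^ t < a n := by
    intro n hn
    simp only [Finset.mem_range, not_lt] at hn
    have : r ^ t ≤ (⌈r ^ t⌉₊ : ℝ) := Nat.le_ceil _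
    have h2 : ((⌈r ^ t⌉₊ : ℝ) + 1) ≤ (n:ℝ) := by exact_mod_cast hn
    calc r ^ t ≤ (⌈r ^ t⌉₊ : ℝ) := this
      _ < (n:ℝ) := by linarith
      _ ≤ a n := han n
  -- rewrite g at r^t and r as finite products
  set f : ℝ → ℕ → ℝ := fun x n => if a n ≤ x then (1 + x / a n) ^ (2 * p n) else 1 with hf
  have hfpos : ∀ x : ℝ, 0 < x → ∀ n, 0 < f x n := by
    intro x hx n
    simp only [hf]
    split
    · exact pow_pos (by have := div_pos hx (ha n); linarith) _
    · norm_num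
  have hgt : g (r ^ t) = (r ^ t)^3 * ∏ n ∈ Finset.range N, f (r ^ t) n := by
    rw [hg]
    congr 1
    exact tprod_eq_prod (fun n hn => by simp only [hf, if_neg (not_le.mpr (hN n hn))])
  have hgr : g r = r^3 * ∏ n ∈ Finset.range N, f r n := by
    rw [hg]
    congr 1
    exact tprod_eq_prod (fun n hn => by
      simp only [hf, if_neg (not_le.mpr (lt_trans hrrt (hN n hn)))])
  set P : ℝ := ∑ n ∈ Finset.range N, (if a n ≤ r ^ s then 2 * (p n : ℝ) else 0) with hP
  have hP0 : 0 ≤ P := Finset.sum_nonneg (fun n _ => by positivity)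
  -- upper bound on log g(r^t)
  have hub : ∀ n ∈ Finset.range N,
      Real.log (f (r ^ t) n) ≤ (if a n ≤ r ^ s then 2 * (p n : ℝ) else 0) * (t * Real.log r) := by
    intro n _
    by_cases hle : a n ≤ r ^ t
    · have hns : a n ≤ r ^ s := by
        by_contra hc
        exact hgap n ⟨not_le.mp hc, hle⟩
      have h4 : (4:ℝ) ≤ a n := ha4 n
      have hrt4 : (4:ℝ) < r ^ t := lt_of_le_of_lt (le_trans h4 hns) hrsrt
      have hfac : 1 + r ^ t / a n ≤ r ^ t := by
        have : r ^ t / a n ≤ r ^ t / 4 :=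
          div_le_div_of_nonneg_left hrt0.le (by norm_num) h4
        linarith
      simp only [hf, if_pos hle, if_pos hns]
      rw [Real.log_pow]
      have hlog : Real.log (1 + r ^ t / a n) ≤ t * Real.log r := by
        rw [← Real.log_rpow hr0]
        exact Real.log_le_log (by positivity) hfac
      calc (2 * p n : ℕ) * Real.log (1 + r ^ t / a n)
          ≤ (2 * p n : ℕ) * (t * Real.log r) := by
            apply mul_le_mul_of_nonneg_left hlog (by positivity)
        _ = 2 * (p n : ℝ) * (t * Real.log r) := by push_cast; ring
    · have hns : ¬ a n ≤ r ^ s := fun hc => hle (le_of_lt (lt_of_le_of_lt hc hrsrt))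
      simp [hf, if_neg hle, if_neg hns]
  -- lower bound on log g(r)
  have hlb : ∀ n ∈ Finset.range N,
      (if a n ≤ r ^ s then 2 * (p n : ℝ) else 0) * ((1 - s) * Real.log r) ≤ Real.log (f r n) := by
    intro n _
    by_cases hns : a n ≤ r ^ s
    · have hle : a n ≤ r := le_of_lt (lt_of_le_of_lt hns hrsr)
      simp only [hf, if_pos hle, if_pos hns]
      rw [Real.log_pow]
      have hrs0 : (0:ℝ) < r ^ s := Real.rpow_pos_of_pos hr0 s
      have hfac : r ^ (1 - s) ≤ 1 + r / a n := by
        have h1 : r ^ (1 - s) = r / r ^ s := by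
          rw [Real.rpow_sub hr0, Real.rpow_one]
        have h2 : r / r ^ s ≤ r / a n := div_le_div_of_nonneg_left hr0.le (ha n) hns
        linarith [h1 ▸ h2]
      have hlog : (1 - s) * Real.log r ≤ Real.log (1 + r / a n) := by
        rw [← Real.log_rpow hr0]
        exact Real.log_le_log (by positivity) hfac
      calc 2 * (p n : ℝ) * ((1 - s) * Real.log r)
          ≤ 2 * (p n : ℝ) * Real.log (1 + r / a n) := by
            apply mul_le_mul_of_nonneg_left hlog (by positivity)
        _ = (2 * p n : ℕ) * Real.log (1 + r / a n) := by push_cast; ring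
    · simp only [if_neg hns, zero_mul]
      apply Real.log_nonneg
      simp only [hf]
      split
      · apply one_le_pow₀
        have := ha n
        have : 0 < r / a n := by positivity
        linarith
      · exact le_refl 1
  have hlogt : Real.log (g (r ^ t)) ≤ (3 + P) * (t * Real.log r) := by
    rw [hgt, Real.log_mul (by positivity) (by
        exact ne_of_gt (Finset.prod_pos (fun n _ => hfpos _ hrt0 n)))]
    rw [Real.log_pow, Real.log_prod (fun n _ => ne_of_gt (hfpos _ hrt0 n)),
        Real.log_rpow hr0]
    have hsum := Finset.sum_le_sum hub
    rw [← Finset.sum_mul] at hsum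
    push_cast
    nlinarith [hsum]
  have hlogr : (3 + (1 - s) * P) * Real.log r ≤ Real.log (g r) := by
    rw [hgr, Real.log_mul (by positivity) (by
        exact ne_of_gt (Finset.prod_pos (fun n _ => hfpos _ hr0 n)))]
    rw [Real.log_pow, Real.log_prod (fun n _ => ne_of_gt (hfpos _ hr0 n))]
    have hsum := Finset.sum_le_sum hlb
    rw [← Finset.sum_mul] at hsum
    push_cast
    nlinarith [hsum]
  have hkey : (3 + P) * t ≤ t * (1 + 2 * s) * (3 + (1 - s) * P) := by
    nlinarith [mul_nonneg hP0 hs.le, mul_nonneg (mul_nonneg hP0 hs.le) (by linarith : (0:ℝ) ≤ 1 - 2*s)]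
  calc Real.log (g (r ^ t)) ≤ (3 + P) * (t * Real.log r) := hlogt
    _ ≤ t * (1 + 2 * s) * ((3 + (1 - s) * P) * Real.log r) := by nlinarith [hkey, hL]
    _ ≤ t * (1 + 2 * s) * Real.log (g r) := by
        apply mul_le_mul_of_nonneg_left hlogr (by nlinarith)
end

section
/- Let f(z) = z³ ∏_{n=1}^∞ (1 + z/aₙ)^(2pₙ) with (aₙ) positive strictly increasing satisfying a_{n+1} > aₙ² and pₙ = ⌊aₙ^(δₙ/4)/4⌋ ≤ aₙ^(δₙ/4)/4 with δₙ < 1/2. Suppose additionally a_{k}^(δ_k/16) > a_{k-1}^(δ_{k-1}) · log a_k + C for appropriate constants (conditions (3.8)–(3.9) of the paper). Then for each k ∈ ℕ and every z ∈ (−a_k, −a_k^(1 − δ_k/16)), |f(z)| < 1. -/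
section auxlemmas

open Finset in
lemma aux_hasProd_of_le_one (h : ℕ → ℝ) (h0 : ∀ n, 0 ≤ h n) (h1 : ∀ n, h n ≤ 1) :
    ∃ Q, HasProd h Q ∧ 0 ≤ Q ∧ Q ≤ 1 := by
  set u : Finset ℕ → ℝ := fun s => ∏ i ∈ s, h i with hu
  have hu0 : ∀ s, 0 ≤ u s := fun s => Finset.prod_nonneg (fun i _ => h0 i)
  have hanti : Antitone u := by
    intro s t hst
    have hdecomp : (∏ i ∈ t \ s, h i) * u s = u t := Finset.prod_sdiff hst
    have h1' : (∏ i ∈ t \ s, h i) ≤ 1 :=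
      Finset.prod_le_one (fun i _ => h0 i) (fun i _ => h1 i)
    nlinarith [hu0 s, Finset.prod_nonneg (fun i (_ : i ∈ t \ s) => h0 i)]
  have hbdd : BddBelow (Set.range u) := ⟨0, by rintro _ ⟨s, rfl⟩; exact hu0 s⟩
  have htend : Filter.Tendsto u Filter.atTop (nhds (⨅ s, u s)) :=
    tendsto_atTop_ciInf hanti hbdd
  refine ⟨⨅ s, u s, htend, le_ciInf hu0, ?_⟩
  calc ⨅ s, u s ≤ u ∅ := ciInf_le hbdd ∅
    _ = 1 := Finset.prod_empty

lemma aux_pow_le_exp (t : ℝ) (h1 : t ≤ 1) (m : ℕ) :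
    (1 - t)^m ≤ Real.exp (-((m:ℝ) * t)) := by
  have h : 1 - t ≤ Real.exp (-t) := by
    have := Real.add_one_le_exp (-t); linarith
  calc (1-t)^m ≤ (Real.exp (-t))^m := pow_le_pow_left₀ (by linarith) h m
    _ = Real.exp (-((m:ℝ)*t)) := by rw [← Real.exp_nat_mul]; ring_nf

lemma aux_a0 (a δ : ℕ → ℝ) (ha : ∀ n, 0 < a n) (hδ : ∀ n, 0 < δ n ∧ δ n < 1/2)
    (h38a : 4 ≤ a 0 ^ (δ 0 / 4)) : 16 < a 0 := by
  by_contra h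
  push_neg at h
  rcases le_or_gt (a 0) 1 with h1 | h1
  · have := Real.rpow_le_one (ha 0).le h1 (by linarith [(hδ 0).1] : (0:ℝ) ≤ δ 0 / 4)
    linarith
  · have h2 : a 0 ^ (δ 0 / 4) ≤ a 0 ^ ((1:ℝ)/8) :=
      Real.rpow_le_rpow_of_exponent_le h1.le (by linarith [(hδ 0).2])
    have h3 : a 0 ^ ((1:ℝ)/8) ≤ (16:ℝ) ^ ((1:ℝ)/8) :=
      Real.rpow_le_rpow (by linarith) h (by norm_num)
    have h4 : (16:ℝ) ^ ((1:ℝ)/8) = 2 ^ ((1:ℝ)/2) := by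
      rw [show (16:ℝ) = 2^(4:ℝ) by norm_num [Real.rpow_natCast], ← Real.rpow_mul (by norm_num)]
      norm_num
    have h5 : (2:ℝ) ^ ((1:ℝ)/2) ≤ 2 := by
      calc (2:ℝ) ^ ((1:ℝ)/2) ≤ 2 ^ (1:ℝ) :=
            Real.rpow_le_rpow_of_exponent_le (by norm_num) (by norm_num)
        _ = 2 := Real.rpow_one 2
    linarith

lemma aux_an (a δ : ℕ → ℝ) (ha : ∀ n, 0 < a n) (hmono : StrictMono a)
    (hδ : ∀ n, 0 < δ n ∧ δ n < 1/2) (h38a : 4 ≤ a 0 ^ (δ 0 / 4)) :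
    ∀ n, 16 < a n := fun n =>
  lt_of_lt_of_le (aux_a0 a δ ha hδ h38a) (hmono.le_iff_le.mpr (Nat.zero_le n))

lemma aux_L1 (a δ : ℕ → ℝ) (ha : ∀ n, 0 < a n) (hmono : StrictMono a)
    (hδ : ∀ n, 0 < δ n ∧ δ n < 1/2) (h38a : 4 ≤ a 0 ^ (δ 0 / 4))
    (h38c : ∀ n, 16 * a n ^ (δ n) < a (n+1) ^ (δ (n+1) / 2)) :
    ∀ n, 4 ≤ a n ^ (δ n / 4) := by
  intro n
  induction n with
  | zero => exact h38a
  | succ m ih =>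
    have h1 : (256:ℝ) ≤ a m ^ (δ m) := by
      have e : a m ^ (δ m) = (a m ^ (δ m / 4))^(4:ℕ) := by
        rw [← Real.rpow_natCast (a m ^ (δ m / 4)) 4, ← Real.rpow_mul (ha m).le]
        norm_num
      rw [e]
      calc (256:ℝ) = 4^(4:ℕ) := by norm_num
        _ ≤ (a m ^ (δ m / 4))^(4:ℕ) := pow_le_pow_left₀ (by norm_num) ih 4
    have h2 : (4096:ℝ) < a (m+1) ^ (δ (m+1) / 2) := by
      have := h38c m; linarith
    have h3 : a (m+1) ^ (δ (m+1) / 2) = (a (m+1) ^ (δ (m+1) / 4))^(2:ℕ) := by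
      rw [← Real.rpow_natCast (a (m+1) ^ (δ (m+1) / 4)) 2, ← Real.rpow_mul (ha (m+1)).le]
      congr 1; ring
    rw [h3] at h2
    nlinarith [Real.rpow_nonneg (ha (m+1)).le (δ (m+1) / 4)]

lemma aux_L2 (a δ : ℕ → ℝ) (ha : ∀ n, 0 < a n) (hmono : StrictMono a)
    (hδ : ∀ n, 0 < δ n ∧ δ n < 1/2) (h38a : 4 ≤ a 0 ^ (δ 0 / 4))
    (h38c : ∀ n, 16 * a n ^ (δ n) < a (n+1) ^ (δ (n+1) / 2)) :
    ∀ n, 64 ≤ a (n+1) ^ (δ (n+1) / 4) := by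
  intro n
  have h1 : (256:ℝ) ≤ a n ^ (δ n) := by
    have e : a n ^ (δ n) = (a n ^ (δ n / 4))^(4:ℕ) := by
      rw [← Real.rpow_natCast (a n ^ (δ n / 4)) 4, ← Real.rpow_mul (ha n).le]
      norm_num
    rw [e]
    calc (256:ℝ) = 4^(4:ℕ) := by norm_num
      _ ≤ _ := pow_le_pow_left₀ (by norm_num) (aux_L1 a δ ha hmono hδ h38a h38c n) 4
  have h2 := h38c n
  have h3 : a (n+1) ^ (δ (n+1) / 2) = (a (n+1) ^ (δ (n+1) / 4))^(2:ℕ) := by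
    rw [← Real.rpow_natCast (a (n+1) ^ (δ (n+1) / 4)) 2, ← Real.rpow_mul (ha (n+1)).le]
    congr 1; ring
  rw [h3] at h2
  nlinarith [Real.rpow_nonneg (ha (n+1)).le (δ (n+1) / 4)]

lemma aux_L5 (a δ : ℕ → ℝ) (ha : ∀ n, 0 < a n) (hmono : StrictMono a)
    (hδ : ∀ n, 0 < δ n ∧ δ n < 1/2) (h38a : 4 ≤ a 0 ^ (δ 0 / 4))
    (h38c : ∀ n, 16 * a n ^ (δ n) < a (n+1) ^ (δ (n+1) / 2)) :
    ∀ n, 2 * a n ^ (δ n / 4) ≤ a (n+1) ^ (δ (n+1) / 4) := by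
  intro n
  have h2 := h38c n
  have e1 : a n ^ (δ n) = (a n ^ (δ n / 4))^(4:ℕ) := by
    rw [← Real.rpow_natCast (a n ^ (δ n / 4)) 4, ← Real.rpow_mul (ha n).le]; norm_num
  have e2 : a (n+1) ^ (δ (n+1) / 2) = (a (n+1) ^ (δ (n+1) / 4))^(2:ℕ) := by
    rw [← Real.rpow_natCast (a (n+1) ^ (δ (n+1) / 4)) 2, ← Real.rpow_mul (ha (n+1)).le]
    congr 1; ring
  rw [e1, e2] at h2
  set t := a n ^ (δ n / 4) with ht
  set s := a (n+1) ^ (δ (n+1) / 4) with hs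
  have ht4 : 4 ≤ t := aux_L1 a δ ha hmono hδ h38a h38c n
  have hs0 : 0 < s := Real.rpow_pos_of_pos (ha (n+1)) _
  have hsq : (2*t)^2 < s^2 := by nlinarith [sq_nonneg (t*t - 4), sq_nonneg t]
  have := lt_of_pow_lt_pow_left₀ 2 hs0.le hsq
  linarith

lemma aux_L4 (a δ : ℕ → ℝ) (ha : ∀ n, 0 < a n) (hmono : StrictMono a)
    (hδ : ∀ n, 0 < δ n ∧ δ n < 1/2) (h38a : 4 ≤ a 0 ^ (δ 0 / 4))
    (h38c : ∀ n, 16 * a n ^ (δ n) < a (n+1) ^ (δ (n+1) / 2)) :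
    ∀ m, ∑ n ∈ Finset.range (m+1), a n ^ (δ n / 4) ≤ 2 * a m ^ (δ m / 4) := by
  intro m
  induction m with
  | zero =>
    simp only [zero_add, Finset.sum_range_one]
    nlinarith [Real.rpow_nonneg (ha 0).le (δ 0 / 4)]
  | succ m ih =>
    rw [Finset.sum_range_succ]
    have := aux_L5 a δ ha hmono hδ h38a h38c m
    linarith

lemma aux_split (g : ℕ → ℝ) (k : ℕ) (Q : ℝ) (hQ : HasProd (fun n => g (n + k)) Q) :
    HasProd g ((∏ i ∈ Finset.range k, g i) * Q) := by
  have hfin : HasProd (g ∘ (↑) : (↑(Finset.range k) : Set ℕ) → ℝ)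
      (∏ i ∈ Finset.range k, g i) := (Finset.range k).hasProd g
  have hcompl : HasProd (fun x : {n // n ∉ Finset.range k} => g x) Q :=
    ((notMemRangeEquiv k).symm.hasProd_iff).mp hQ
  exact hfin.mul_compl hcompl

end auxlemmas

set_option maxHeartbeats 2000000 in
/-- f is small near its zeros (Lemma 3.3). -/
theorem stmt10 (a δ : ℕ → ℝ) (p : ℕ → ℕ) (f : ℂ → ℂ)
    (ha : ∀ n, 0 < a n) (hmono : StrictMono a)
    (hδ : ∀ n, 0 < δ n ∧ δ n < 1/2)
    (h38a : 4 ≤ a 0 ^ (δ 0 / 4))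
    (h38b : ∀ n, (a n)^2 < a (n+1))
    (h38c : ∀ n, 16 * a n ^ (δ n) < a (n+1) ^ (δ (n+1) / 2))
    (h39 : ∀ n, a n ^ (δ n) * Real.log (a (n+1)) < a (n+1) ^ (δ (n+1) / 16))
    (hp : ∀ n, p n = Nat.floor (a n ^ (δ n / 4) / 4))
    (hf : ∀ z : ℂ, f z = z^3 * ∏' n : ℕ, (1 + z / (a n : ℂ)) ^ (2 * p n)) :
    ∀ k : ℕ, 1 ≤ k → ∀ x : ℝ, -(a k) < x → x < -(a k ^ (1 - δ k / 16)) →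
      ‖f (x : ℂ)‖ < 1 := by
  intro k hk x hx1 hx2
  obtain ⟨j, rfl⟩ : ∃ j, k = j + 1 := ⟨k - 1, (Nat.succ_pred_eq_of_pos hk).symm⟩
  have hA16 := aux_an a δ ha hmono hδ h38a
  set A := a (j+1) with hAdef
  set D := δ (j+1) with hDdef
  have hApos : 0 < A := ha (j+1)
  have hA16' : (16:ℝ) < A := hA16 (j+1)
  have hA1 : 1 < A := by linarith [hA16 (j+1)]
  have hD0 : 0 < D := (hδ (j+1)).1
  -- basic facts about x
  have hxneg : x < 0 := lt_trans hx2 (by simp [Real.rpow_pos_of_pos hApos])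
  have hxabs : |x| ≤ A := by rw [abs_le]; constructor <;> linarith
  -- τ
  set τ : ℝ := A ^ (-(D/16)) with hτdef
  have hτpos : 0 < τ := Real.rpow_pos_of_pos hApos _
  have hτ1 : τ ≤ 1 := Real.rpow_le_one_of_one_le_of_nonpos hA1.le (by linarith)
  have hAτ : A ^ (1 - D/16) = A * τ := by
    rw [show (1 - D/16) = 1 + (-(D/16)) by ring, Real.rpow_add hApos, Real.rpow_one]
  -- the real sequence
  set g : ℕ → ℝ := fun n => (1 + x / a n)^(2 * p n) with hgdef
  have hg0 : ∀ n, 0 ≤ g n := by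
    intro n
    show 0 ≤ (1 + x / a n)^(2 * p n)
    rw [pow_mul]
    exact pow_nonneg (sq_nonneg _) _
  -- the tail has a product Q ∈ [0,1]
  obtain ⟨Q, hQ, hQ0, hQ1⟩ :
      ∃ Q, HasProd (fun n => g (n + (j+2))) Q ∧ 0 ≤ Q ∧ Q ≤ 1 := by
    apply aux_hasProd_of_le_one
    · intro n; exact hg0 _
    · intro n
      show (1 + x / a (n + (j+2)))^(2 * p (n + (j+2))) ≤ 1
      have ham : A < a (n + (j+2)) := hmono (by omega)
      have hb0 : 0 < 1 + x / a (n + (j+2)) := by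
        have : -(a (n + (j+2))) < x := by linarith
        have := (div_lt_div_iff_of_pos_right (ha (n + (j+2)))).mpr this
        rw [neg_div] at this
        have h2 : (a (n + (j+2))) / (a (n + (j+2))) = 1 := div_self (ha _).ne'
        rw [h2] at this
        linarith
      have hb1 : 1 + x / a (n + (j+2)) ≤ 1 := by
        have : x / a (n + (j+2)) ≤ 0 := div_nonpos_of_nonpos_of_nonneg hxneg.le (ha _).le
        linarith
      exact pow_le_one₀ hb0.le hb1
  -- full product
  set P : ℝ := (∏ i ∈ Finset.range (j+2), g i) * Q with hPdef
  have hgP : HasProd g P := aux_split g (j+2) Q hQ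
  -- transfer to ℂ
  have hCP : HasProd (fun n : ℕ => ((1:ℂ) + (x:ℂ) / (a n : ℂ)) ^ (2 * p n)) ((P:ℝ) : ℂ) := by
    have h := hgP.map Complex.ofRealHom Complex.continuous_ofReal
    have e : (⇑Complex.ofRealHom ∘ g) = fun n : ℕ => ((1:ℂ) + (x:ℂ) / (a n : ℂ)) ^ (2 * p n) := by
      funext n
      simp only [Function.comp_apply, hgdef, Complex.ofRealHom_eq_coe]
      push_cast
      ring
    rwa [e] at h
  have habsf : ‖f (x:ℂ)‖ = |x|^3 * P := by
    rw [hf, hCP.tprod_eq]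
    rw [norm_mul, norm_pow, Complex.norm_real, Complex.norm_real, Real.norm_eq_abs, Real.norm_eq_abs]
    congr 1
    have hP0 : 0 ≤ P := by
      apply mul_nonneg _ hQ0
      exact Finset.prod_nonneg fun i _ => hg0 i
    exact abs_of_nonneg hP0
  rw [habsf]
  -- now the numeric estimate
  set S : ℕ := ∑ n ∈ Finset.range (j+1), p n with hSdef
  -- bound on the middle factor
  have hgk : g (j+1) ≤ Real.exp (-(((2 * p (j+1) : ℕ) : ℝ) * τ)) := by
    have hb0 : 0 < 1 + x / A := by
      have := (div_lt_div_iff_of_pos_right hApos).mpr hx1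
      rw [neg_div, div_self hApos.ne'] at this
      linarith
    have hbτ : 1 + x / A ≤ 1 - τ := by
      have hxA : x ≤ -(A * τ) := by rw [← hAτ]; exact hx2.le
      have : x / A ≤ -(A * τ) / A := by gcongr
      rw [neg_div, mul_comm, mul_div_assoc, div_self hApos.ne', mul_one] at this
      linarith
    calc g (j+1) = (1 + x / A)^(2 * p (j+1)) := rfl
      _ ≤ (1 - τ)^(2 * p (j+1)) := pow_le_pow_left₀ hb0.le hbτ _
      _ ≤ Real.exp (-(((2 * p (j+1) : ℕ) : ℝ) * τ)) := aux_pow_le_exp τ hτ1 _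
  -- bound on the initial factors
  have hinit : ∏ n ∈ Finset.range (j+1), g n ≤ (2*A)^(2*S) := by
    have hstep : ∀ n ∈ Finset.range (j+1), g n ≤ (2*A)^(2 * p n) := by
      intro n _
      show (1 + x / a n)^(2 * p n) ≤ (2*A)^(2 * p n)
      have han1 : 1 < a n := by linarith [hA16 n]
      have habs : |1 + x / a n| ≤ 2*A := by
        have h1 : |x / a n| ≤ A := by
          rw [abs_div, abs_of_pos (ha n)]
          calc |x| / a n ≤ |x| / 1 := by
                apply div_le_div_of_nonneg_left (abs_nonneg x) one_pos han1.le
            _ = |x| := div_one _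
            _ ≤ A := hxabs
        calc |1 + x / a n| ≤ |1| + |x / a n| := abs_add_le _ _
          _ ≤ 1 + A := by rw [abs_one]; linarith
          _ ≤ 2*A := by linarith
      rw [pow_mul, pow_mul]
      apply pow_le_pow_left₀ (sq_nonneg _)
      rw [abs_le] at habs
      nlinarith [habs.1, habs.2]
    calc ∏ n ∈ Finset.range (j+1), g n ≤ ∏ n ∈ Finset.range (j+1), (2*A)^(2 * p n) :=
          Finset.prod_le_prod (fun i _ => hg0 i) hstep
      _ = (2*A)^(∑ n ∈ Finset.range (j+1), 2 * p n) := Finset.prod_pow_eq_pow_sum _ _ _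
      _ = (2*A)^(2*S) := by rw [hSdef, Finset.mul_sum]
  -- main exponent comparison
  set E1 : ℝ := ((3:ℝ) + 2*S) * Real.log (2*A) with hE1def
  set E2 : ℝ := ((2 * p (j+1) : ℕ) : ℝ) * τ with hE2def
  have hAD16pos : 0 < A ^ (D/16) := Real.rpow_pos_of_pos hApos _
  have hE1small : E1 < A ^ (D/16) / 16 := by
    have htj := aux_L1 a δ ha hmono hδ h38a h38c j
    have hS2 : 2*(S:ℝ) ≤ a j ^ (δ j / 4) := by
      have h1 : ∀ n ∈ Finset.range (j+1), (p n : ℝ) ≤ a n ^ (δ n / 4) / 4 := by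
        intro n _
        rw [hp n]
        exact Nat.floor_le (div_nonneg (Real.rpow_nonneg (ha n).le _) (by norm_num))
      have h2 : (S:ℝ) ≤ ∑ n ∈ Finset.range (j+1), a n ^ (δ n / 4) / 4 := by
        rw [hSdef]
        push_cast
        exact Finset.sum_le_sum h1
      rw [← Finset.sum_div] at h2
      have h3 := aux_L4 a δ ha hmono hδ h38a h38c j
      linarith
    have h64 : a j ^ (δ j / 4) ≤ a j ^ (δ j) / 64 := by
      have e : a j ^ (δ j) = (a j ^ (δ j / 4))^(4:ℕ) := by
        rw [← Real.rpow_natCast (a j ^ (δ j / 4)) 4, ← Real.rpow_mul (ha j).le]; norm_num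
      have ht3 : (64:ℝ) ≤ (a j ^ (δ j / 4))^3 := by
        calc (64:ℝ) = 4^3 := by norm_num
          _ ≤ (a j ^ (δ j / 4))^3 := pow_le_pow_left₀ (by norm_num) htj 3
      have ht4 : 64 * (a j ^ (δ j / 4)) ≤ (a j ^ (δ j / 4))^3 * (a j ^ (δ j / 4)) :=
        mul_le_mul_of_nonneg_right ht3 (by linarith)
      have : (a j ^ (δ j / 4))^(4:ℕ) = (a j ^ (δ j / 4))^3 * (a j ^ (δ j / 4)) := by ring
      rw [e, this]
      linarith
    have hlog2A : Real.log (2*A) ≤ 2 * Real.log A := by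
      rw [Real.log_mul (by norm_num) hApos.ne']
      have h2 : Real.log 2 ≤ Real.log A := Real.log_le_log (by norm_num) (by linarith)
      linarith
    have hlogpos : 0 < Real.log A := Real.log_pos hA1
    have hlog2Apos : 0 < Real.log (2*A) := Real.log_pos (by linarith)
    have hsum : (3:ℝ) + 2*S ≤ 2 * a j ^ (δ j / 4) := by linarith
    have h39j := h39 j
    have hδjnn : 0 ≤ a j ^ (δ j) := Real.rpow_nonneg (ha j).le _
    calc E1 ≤ (2 * a j ^ (δ j / 4)) * Real.log (2*A) := by
          apply mul_le_mul_of_nonneg_right hsum hlog2Apos.le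
      _ ≤ (2 * (a j ^ (δ j) / 64)) * (2 * Real.log A) := by
          apply mul_le_mul (by linarith) hlog2A hlog2Apos.le (by linarith)
      _ = (a j ^ (δ j) * Real.log A) / 16 := by ring
      _ < A ^ (D/16) / 16 := by
          have : a j ^ (δ j) * Real.log A < A ^ (D/16) := h39j
          linarith
  have hE2big : 2 * A ^ (D/16) ≤ E2 := by
    have hu := aux_L2 a δ ha hmono hδ h38a h38c j
    set u : ℝ := A ^ (D/4) with hudef
    have hup : (u/4 : ℝ) ≤ (2 * p (j+1) : ℕ) := by
      have hfl : u/4 - 1 < (p (j+1) : ℝ) := by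
        rw [hp (j+1)]
        exact Nat.sub_one_lt_floor _
      push_cast
      linarith
    have huτ : u * τ = A ^ (D/8) * A ^ (D/16) := by
      rw [hudef, hτdef, ← Real.rpow_add hApos, ← Real.rpow_add hApos]
      congr 1; ring
    have hD8 : 8 ≤ A ^ (D/8) := by
      have e : u = (A ^ (D/8))^(2:ℕ) := by
        rw [hudef, ← Real.rpow_natCast (A ^ (D/8)) 2, ← Real.rpow_mul hApos.le]
        congr 1; ring
      have hpos : 0 < A ^ (D/8) := Real.rpow_pos_of_pos hApos _
      nlinarith [hu, e]
    have huτbig : 8 * A ^ (D/16) ≤ u * τ := by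
      rw [huτ]
      apply mul_le_mul_of_nonneg_right hD8 hAD16pos.le
    rw [hE2def]
    calc 2 * A ^ (D/16) = (8 * A ^ (D/16))/4 := by ring
      _ ≤ (u * τ)/4 := by linarith
      _ = (u/4) * τ := by ring
      _ ≤ ((2 * p (j+1) : ℕ) : ℝ) * τ := mul_le_mul_of_nonneg_right hup hτpos.le
  have hE1E2 : E1 < E2 := by
    calc E1 < A ^ (D/16) / 16 := hE1small
      _ < 2 * A ^ (D/16) := by linarith
      _ ≤ E2 := hE2big
  -- assemble
  have hbound1 : |x|^3 * P ≤ A^3 * ((2*A)^(2*S) * Real.exp (-E2)) := by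
    have hx3 : |x|^3 ≤ A^3 := pow_le_pow_left₀ (abs_nonneg x) hxabs 3
    have hprodfull : ∏ i ∈ Finset.range (j+2), g i ≤ (2*A)^(2*S) * Real.exp (-E2) := by
      rw [Finset.prod_range_succ]
      apply mul_le_mul hinit hgk (hg0 _) (by positivity)
    have hP : P ≤ (2*A)^(2*S) * Real.exp (-E2) := by
      rw [hPdef]
      calc (∏ i ∈ Finset.range (j+2), g i) * Q ≤ (∏ i ∈ Finset.range (j+2), g i) * 1 := by
            apply mul_le_mul_of_nonneg_left hQ1 (Finset.prod_nonneg fun i _ => hg0 i)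
        _ = ∏ i ∈ Finset.range (j+2), g i := mul_one _
        _ ≤ _ := hprodfull
    have hP0 : 0 ≤ P := mul_nonneg (Finset.prod_nonneg fun i _ => hg0 i) hQ0
    apply mul_le_mul hx3 hP hP0 (by positivity)
  have hbound2 : A^3 * ((2*A)^(2*S) * Real.exp (-E2)) < 1 := by
    have h2A1 : 1 < 2*A := by linarith
    have hlog : (2*A) = Real.exp (Real.log (2*A)) := (Real.exp_log (by linarith)).symm
    have hA2A : A^3 * (2*A)^(2*S) ≤ Real.exp E1 := by
      have h1 : A^3 ≤ (2*A)^3 := pow_le_pow_left₀ hApos.le (by linarith) 3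
      have h2 : A^3 * (2*A)^(2*S) ≤ (2*A)^(3 + 2*S) := by
        rw [pow_add]
        apply mul_le_mul_of_nonneg_right h1 (by positivity)
      have h3 : (2*A)^(3 + 2*S) = Real.exp (((3 + 2*S : ℕ) : ℝ) * Real.log (2*A)) := by
        rw [hlog, ← Real.exp_nat_mul]
        norm_num
      rw [h3] at h2
      have h4 : (((3 + 2*S : ℕ) : ℝ) * Real.log (2*A)) = E1 := by
        rw [hE1def]; push_cast; ring
      rwa [h4] at h2
    calc A^3 * ((2*A)^(2*S) * Real.exp (-E2)) = (A^3 * (2*A)^(2*S)) * Real.exp (-E2) := by ring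
      _ ≤ Real.exp E1 * Real.exp (-E2) := by
          apply mul_le_mul_of_nonneg_right hA2A (Real.exp_nonneg _)
      _ = Real.exp (E1 - E2) := by rw [← Real.exp_add]; ring_nf
      _ < Real.exp 0 := Real.exp_lt_exp.mpr (by linarith)
      _ = 1 := Real.exp_zero
  linarith
end

section
/- Let (aₘ)_{m≥k+1} satisfy aₘ ≥ a_{m-1}² and a_{k+1} ≥ r², and pₘ ≤ aₘ^(1/8)/4 (so 2pₘ ≤ aₘ^(1/2)). Then ∏_{m ≥ k+1} (1 + r/aₘ)^(2pₘ) ≤ ∏_{m≥k+1} (1 + 1/aₘ^(1 − 1/2^(m−k)))^(aₘ^(1/2)) ≤ e^(1 + 1/2 + 1/4 + ⋯) = e². -/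
open Real

private lemma tail_pow_lb (b : ℕ → ℝ) (c : ℝ) (hc : 0 ≤ c) (h0 : c ≤ b 0)
    (hstep : ∀ j, (b j) ^ 2 ≤ b (j + 1)) : ∀ j, c ^ (2 ^ j : ℕ) ≤ b j := by
  intro j
  induction j with
  | zero => simpa using h0
  | succ n ih =>
      calc c ^ (2 ^ (n + 1) : ℕ) = (c ^ (2 ^ n : ℕ)) ^ 2 := by
            rw [← pow_mul, pow_succ]
        _ ≤ (b n) ^ 2 := pow_le_pow_left₀ (by positivity) ih 2
        _ ≤ b (n + 1) := hstep n

private lemma tail_main (b : ℕ → ℝ) (q : ℕ → ℕ) (r : ℝ)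
    (hbpos : ∀ j, 0 < b j) (hr : 0 < r)
    (hstep : ∀ j, (b j) ^ 2 ≤ b (j + 1))
    (hk1 : r ^ 2 ≤ b 0) (hk16 : 16 ≤ b 0)
    (hq : ∀ j, (q j : ℝ) ≤ b j ^ ((1:ℝ)/8) / 4) :
    (∏' j : ℕ, (1 + r / b j) ^ (2 * q j))
        ≤ (∏' j : ℕ, (1 + 1 / b j ^ (1 - 1 / (2:ℝ) ^ (j + 1))) ^ (b j ^ ((1:ℝ)/2))) ∧
    (∏' j : ℕ, (1 + 1 / b j ^ (1 - 1 / (2:ℝ) ^ (j + 1))) ^ (b j ^ ((1:ℝ)/2)))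
        ≤ Real.exp 2 := by
  have h16 : ∀ j, (16:ℝ) ^ (2 ^ j : ℕ) ≤ b j :=
    tail_pow_lb b 16 (by norm_num) hk16 hstep
  have hb1 : ∀ j, (1:ℝ) ≤ b j := fun j =>
    le_trans (one_le_pow₀ (by norm_num)) (h16 j)
  have hb0pow : ∀ j, (b 0) ^ (2 ^ j : ℕ) ≤ b j :=
    tail_pow_lb b (b 0) (hbpos 0).le le_rfl hstep
  set F : ℕ → ℝ := fun j => (1 + r / b j) ^ (2 * q j) with hF
  set x : ℕ → ℝ := fun j => 1 / b j ^ (1 - 1 / (2:ℝ) ^ (j + 1)) with hx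
  set G : ℕ → ℝ := fun j => (1 + x j) ^ (b j ^ ((1:ℝ)/2)) with hG
  have hxpos : ∀ j, 0 < x j := fun j => by
    have := hbpos j
    simp only [hx]
    positivity
  -- r ≤ b j ^ (1/2^(j+1))
  have hrle : ∀ j, r ≤ b j ^ (1 / (2:ℝ) ^ (j + 1)) := by
    intro j
    have hbj := hbpos j
    have hA : b 0 ≤ b j ^ (1 / (2:ℝ) ^ j) := by
      have h := Real.rpow_le_rpow (by positivity) (hb0pow j)
        (by positivity : (0:ℝ) ≤ 1 / (2:ℝ) ^ j)
      rw [← Real.rpow_natCast (b 0) (2 ^ j), ← Real.rpow_mul (hbpos 0).le] at h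
      have hcast : ((2 ^ j : ℕ) : ℝ) * (1 / (2:ℝ) ^ j) = 1 := by
        push_cast
        field_simp
      rwa [hcast, Real.rpow_one] at h
    have hr2 : r ^ 2 ≤ b j ^ (1 / (2:ℝ) ^ j) := le_trans hk1 hA
    have h := Real.rpow_le_rpow (by positivity) hr2 (by norm_num : (0:ℝ) ≤ 1/2)
    rw [← Real.rpow_natCast r 2, ← Real.rpow_mul hr.le, ← Real.rpow_mul hbj.le] at h
    have h1 : ((2:ℕ):ℝ) * (1/2 : ℝ) = 1 := by norm_num
    have h2 : (1 / (2:ℝ) ^ j) * (1/2 : ℝ) = 1 / (2:ℝ) ^ (j + 1) := by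
      rw [pow_succ]; ring
    rwa [h1, h2, Real.rpow_one] at h
  -- r / b j ≤ x j
  have hrx : ∀ j, r / b j ≤ x j := by
    intro j
    have hbj := hbpos j
    have e1 : r / b j = r * b j ^ (-1 : ℝ) := by
      rw [Real.rpow_neg_one]; ring
    have e2 : x j = b j ^ (1 / (2:ℝ) ^ (j+1)) * b j ^ (-1 : ℝ) := by
      rw [show x j = (b j ^ (1 - 1/(2:ℝ)^(j+1)))⁻¹ from by simp [hx, one_div],
        ← Real.rpow_add hbj, ← Real.rpow_neg hbj.le]
      congr 1
      ring
    rw [e1, e2]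
    exact mul_le_mul_of_nonneg_right (hrle j) (Real.rpow_nonneg hbj.le _)
  -- 2 q j ≤ b j ^ (1/2)
  have hNp : ∀ j, 2 * (q j : ℝ) ≤ b j ^ ((1:ℝ)/2) := by
    intro j
    have h1 := hq j
    have h2 : b j ^ ((1:ℝ)/8) ≤ b j ^ ((1:ℝ)/2) :=
      Real.rpow_le_rpow_of_exponent_le (hb1 j) (by norm_num)
    have h3 : (0:ℝ) ≤ b j ^ ((1:ℝ)/8) := Real.rpow_nonneg (hbpos j).le _
    nlinarith
  -- F j ≤ G j
  have hFG : ∀ j, F j ≤ G j := by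
    intro j
    have hbj := hbpos j
    have h1x : (1:ℝ) ≤ 1 + x j := by linarith [hxpos j]
    have hbase : (0:ℝ) < 1 + r / b j := by positivity
    calc F j = (1 + r / b j) ^ ((2 * q j : ℕ) : ℝ) := (Real.rpow_natCast _ _).symm
      _ ≤ (1 + x j) ^ ((2 * q j : ℕ) : ℝ) :=
          Real.rpow_le_rpow hbase.le (by linarith [hrx j]) (Nat.cast_nonneg _)
      _ ≤ (1 + x j) ^ (b j ^ ((1:ℝ)/2)) := by
          apply Real.rpow_le_rpow_of_exponent_le h1x
          push_cast
          exact hNp j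
  have hF1 : ∀ j, (1:ℝ) ≤ F j := by
    intro j
    apply one_le_pow₀
    have : 0 ≤ r / b j := div_nonneg hr.le (hbpos j).le
    linarith
  have hG1 : ∀ j, (1:ℝ) ≤ G j := fun j =>
    Real.one_le_rpow (by linarith [hxpos j]) (Real.rpow_nonneg (hbpos j).le _)
  -- G j ≤ exp ((1/2)^j)
  have hGE : ∀ j, G j ≤ Real.exp (((1:ℝ)/2) ^ j) := by
    intro j
    have hbj := hbpos j
    have h1x : (0:ℝ) < 1 + x j := by linarith [hxpos j]
    have hlog : Real.log (1 + x j) ≤ x j := by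
      have := Real.log_le_sub_one_of_pos h1x
      linarith
    have hNx : b j ^ ((1:ℝ)/2) * x j ≤ ((1:ℝ)/2) ^ j := by
      have key : (2:ℝ) ^ j ≤ b j ^ ((1:ℝ)/2 - 1 / (2:ℝ) ^ (j + 1)) := by
        have hbase : (2:ℝ) ^ (2 ^ (j + 2) : ℕ) ≤ b j := by
          have he : (16:ℝ) ^ (2 ^ j : ℕ) = (2:ℝ) ^ (2 ^ (j + 2) : ℕ) := by
            rw [show (16:ℝ) = 2 ^ (4:ℕ) by norm_num, ← pow_mul]
            congr 1
            rw [show 2 ^ (j + 2) = 4 * 2 ^ j by ring]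
          rw [← he]; exact h16 j
        have hs : (0:ℝ) ≤ (1:ℝ)/2 - 1 / (2:ℝ) ^ (j + 1) := by
          have h2le : (2:ℝ) ≤ 2 ^ (j + 1) := by
            calc (2:ℝ) = 2 ^ 1 := (pow_one 2).symm
              _ ≤ 2 ^ (j + 1) := pow_le_pow_right₀ (by norm_num) (by omega)
          have : (1:ℝ) / (2:ℝ) ^ (j+1) ≤ 1/2 :=
            div_le_div_of_nonneg_left (by norm_num) (by norm_num) h2le
          linarith
        have h1 : ((2:ℝ) ^ (2 ^ (j + 2) : ℕ)) ^ ((1:ℝ)/2 - 1 / (2:ℝ) ^ (j + 1))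
            ≤ b j ^ ((1:ℝ)/2 - 1 / (2:ℝ) ^ (j + 1)) :=
          Real.rpow_le_rpow (by positivity) hbase hs
        refine le_trans ?_ h1
        rw [← Real.rpow_natCast (2:ℝ) (2 ^ (j + 2)),
          ← Real.rpow_mul (by norm_num : (0:ℝ) ≤ 2)]
        have hexp : ((2 ^ (j + 2) : ℕ) : ℝ) * ((1:ℝ)/2 - 1 / (2:ℝ) ^ (j + 1))
            = (2:ℝ) ^ (j + 1) - 2 := by
          push_cast
          have h2j : ((2:ℝ)) ^ (j+1) ≠ 0 := by positivity
          field_simp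
          ring
        rw [hexp, ← Real.rpow_natCast (2:ℝ) j]
        apply Real.rpow_le_rpow_of_exponent_le (by norm_num)
        have hn : j + 2 ≤ 2 ^ (j + 1) := Nat.lt_two_pow_self (n := j + 1)
        have : (j:ℝ) + 2 ≤ (2:ℝ) ^ (j + 1) := by
          calc (j:ℝ) + 2 = ((j + 2 : ℕ) : ℝ) := by push_cast; ring
            _ ≤ ((2 ^ (j+1) : ℕ) : ℝ) := by exact_mod_cast hn
            _ = (2:ℝ) ^ (j+1) := by push_cast; ring
        linarith
      have heq : b j ^ ((1:ℝ)/2) * x j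
          = (b j ^ ((1:ℝ)/2 - 1 / (2:ℝ) ^ (j + 1)))⁻¹ := by
        rw [show x j = (b j ^ (1 - 1/(2:ℝ)^(j+1)))⁻¹ from by simp [hx, one_div],
          ← Real.rpow_neg hbj.le, ← Real.rpow_add hbj, ← Real.rpow_neg hbj.le]
        congr 1
        ring
      rw [heq]
      have hpos2 : (0:ℝ) < (2:ℝ) ^ j := by positivity
      rw [show ((1:ℝ)/2) ^ j = ((2:ℝ) ^ j)⁻¹ by rw [div_pow, one_pow, one_div]]
      exact inv_anti₀ hpos2 key
    calc G j = Real.exp (Real.log (1 + x j) * (b j ^ ((1:ℝ)/2))) :=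
          Real.rpow_def_of_pos h1x _
      _ ≤ Real.exp (((1:ℝ)/2) ^ j) := by
          apply Real.exp_le_exp.mpr
          calc Real.log (1 + x j) * (b j ^ ((1:ℝ)/2))
              ≤ x j * (b j ^ ((1:ℝ)/2)) :=
                mul_le_mul_of_nonneg_right hlog (Real.rpow_nonneg hbj.le _)
            _ = b j ^ ((1:ℝ)/2) * x j := by ring
            _ ≤ ((1:ℝ)/2) ^ j := hNx
  -- summability of logs
  have hFpos : ∀ j, (0:ℝ) < F j := fun j => lt_of_lt_of_le one_pos (hF1 j)
  have hGpos : ∀ j, (0:ℝ) < G j := fun j => lt_of_lt_of_le one_pos (hG1 j)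
  have hsumc : Summable (fun j : ℕ => ((1:ℝ)/2) ^ j) :=
    summable_geometric_of_lt_one (by norm_num) (by norm_num)
  have hlogG_le : ∀ j, Real.log (G j) ≤ ((1:ℝ)/2) ^ j := by
    intro j
    calc Real.log (G j) ≤ Real.log (Real.exp (((1:ℝ)/2) ^ j)) :=
          Real.log_le_log (hGpos j) (hGE j)
      _ = ((1:ℝ)/2) ^ j := Real.log_exp _
  have hlogG_nonneg : ∀ j, 0 ≤ Real.log (G j) := fun j => Real.log_nonneg (hG1 j)
  have hsumG : Summable (fun j => Real.log (G j)) :=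
    Summable.of_nonneg_of_le hlogG_nonneg hlogG_le hsumc
  have hlogF_le : ∀ j, Real.log (F j) ≤ Real.log (G j) := fun j =>
    Real.log_le_log (hFpos j) (hFG j)
  have hlogF_nonneg : ∀ j, 0 ≤ Real.log (F j) := fun j => Real.log_nonneg (hF1 j)
  have hsumF : Summable (fun j => Real.log (F j)) :=
    Summable.of_nonneg_of_le hlogF_nonneg hlogF_le hsumG
  -- products as exponentials of sums
  have hprodF : HasProd F (Real.exp (∑' j, Real.log (F j))) := by
    have h := hsumF.hasSum.rexp
    have he : (rexp ∘ fun j => Real.log (F j)) = F := by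
      funext j
      simp [Function.comp, Real.exp_log (hFpos j)]
    rwa [he] at h
  have hprodG : HasProd G (Real.exp (∑' j, Real.log (G j))) := by
    have h := hsumG.hasSum.rexp
    have he : (rexp ∘ fun j => Real.log (G j)) = G := by
      funext j
      simp [Function.comp, Real.exp_log (hGpos j)]
    rwa [he] at h
  rw [hprodF.tprod_eq, hprodG.tprod_eq]
  constructor
  · apply Real.exp_le_exp.mpr
    exact Summable.tsum_le_tsum hlogF_le hsumF hsumG
  · apply Real.exp_le_exp.mpr
    calc (∑' j, Real.log (G j)) ≤ ∑' j : ℕ, ((1:ℝ)/2) ^ j :=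
          Summable.tsum_le_tsum hlogG_le hsumG hsumc
      _ = 2 := tsum_geometric_two

/-- Tail product bound: the tail of the product defining f is at most e². -/
theorem stmt12 (a : ℕ → ℝ) (p : ℕ → ℕ) (k : ℕ) (r : ℝ)
    (ha : ∀ n, 0 < a n) (hr : 0 < r)
    (hsq : ∀ m, k + 1 < m → (a (m - 1))^2 ≤ a m)
    (hk1 : r ^ 2 ≤ a (k + 1)) (hk16 : 16 ≤ a (k + 1))
    (hpbound : ∀ m, k + 1 ≤ m → (p m : ℝ) ≤ a m ^ ((1:ℝ)/8) / 4) :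
    (∏' j : ℕ, (1 + r / a (k + 1 + j)) ^ (2 * p (k + 1 + j)))
        ≤ (∏' j : ℕ, (1 + 1 / a (k + 1 + j) ^ (1 - 1 / (2:ℝ) ^ (j + 1)))
              ^ (a (k + 1 + j) ^ ((1:ℝ)/2))) ∧
    (∏' j : ℕ, (1 + 1 / a (k + 1 + j) ^ (1 - 1 / (2:ℝ) ^ (j + 1)))
          ^ (a (k + 1 + j) ^ ((1:ℝ)/2)))
        ≤ Real.exp 2 := by
  have hstep : ∀ j, (a (k + 1 + j)) ^ 2 ≤ a (k + 1 + (j + 1)) := by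
    intro j
    have h1 : k + 1 < k + 1 + j + 1 := by omega
    have h2 := hsq (k + 1 + j + 1) h1
    simp only [Nat.add_sub_cancel] at h2
    have h3 : k + 1 + (j + 1) = k + 1 + j + 1 := by omega
    rw [h3]
    exact h2
  exact tail_main (fun j => a (k + 1 + j)) (fun j => p (k + 1 + j)) r
    (fun j => ha _) hr hstep (by simpa using hk1) (by simpa using hk16)
    (fun j => hpbound (k + 1 + j) (by omega))
end

section
/- Under the assumptions of Theorem 3 (construction of the zero-counting sequence (aₙ), pₙ = ⌊aₙ^(δₙ/4)/4⌋, g as in (3.3), and the separation conditions (3.8), (3.9)): for each k ∈ ℕ, log g(a_k) ≥ p_k^(1/2) · log g(a_k^(1 − δ_k/16)). -/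
set_option maxHeartbeats 1000000

/-- Large increase of g at the zeros (Lemma 3.4 of the paper, "large" lemma). -/
theorem stmt13 (a δ : ℕ → ℝ) (p : ℕ → ℕ) (g : ℝ → ℝ)
    (ha : ∀ n, 0 < a n) (hmono : StrictMono a)
    (hδ : ∀ n, 0 < δ n ∧ δ n < 1/2)
    (h38a : 4 ≤ a 0 ^ (δ 0 / 4))
    (h38b : ∀ n, (a n)^2 < a (n+1))
    (h38c : ∀ n, 16 * a n ^ (δ n) < a (n+1) ^ (δ (n+1) / 2))
    (h39 : ∀ n, a n ^ (δ n) * Real.log (a (n+1)) < a (n+1) ^ (δ (n+1) / 16))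
    (hp : ∀ n, p n = Nat.floor (a n ^ (δ n / 4) / 4))
    (hg : ∀ r : ℝ, g r =
      r^3 * ∏' n : ℕ, if a n ≤ r then (1 + r / a n) ^ (2 * p n) else 1) :
    ∀ k : ℕ, 1 ≤ k →
      Real.sqrt (p k) * Real.log (g (a k ^ (1 - δ k / 16))) ≤ Real.log (g (a k)) := by
  -- basic facts about a
  have ha0 : 4 ≤ a 0 := by
    rcases le_or_gt (a 0) 1 with h | h
    · have : a 0 ^ (δ 0 / 4) ≤ 1 :=
        Real.rpow_le_one (ha 0).le h (by linarith [(hδ 0).1])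
      linarith
    · have : a 0 ^ (δ 0 / 4) ≤ a 0 ^ (1 : ℝ) :=
        Real.rpow_le_rpow_of_exponent_le h.le (by linarith [(hδ 0).2])
      rw [Real.rpow_one] at this; linarith
  have ha4 : ∀ n, 4 ≤ a n := fun n => ha0.trans (hmono.monotone (Nat.zero_le n))
  -- abbreviation q n = a n ^ (δ n / 4)
  set q : ℕ → ℝ := fun n => a n ^ (δ n / 4) with hq_def
  have hqpos : ∀ n, 0 < q n := fun n => Real.rpow_pos_of_pos (ha n) _
  have hqpow4 : ∀ n, (q n) ^ (4 : ℕ) = a n ^ (δ n) := by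
    intro n
    simp only [hq_def]
    rw [← Real.rpow_natCast (a n ^ (δ n / 4)) 4, ← Real.rpow_mul (ha n).le]
    norm_num
  have hqpow2 : ∀ n, (q n) ^ (2 : ℕ) = a n ^ (δ n / 2) := by
    intro n
    simp only [hq_def]
    rw [← Real.rpow_natCast (a n ^ (δ n / 4)) 2, ← Real.rpow_mul (ha n).le]
    congr 1
    ring
  have hstep : ∀ n, 4 * (q n) ^ 2 < q (n + 1) := by
    intro n
    have h := h38c n
    rw [← hqpow4 n, ← hqpow2 (n + 1)] at h
    have h2 : (4 * (q n) ^ 2) ^ 2 < (q (n + 1)) ^ 2 := by nlinarith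
    exact lt_of_pow_lt_pow_left₀ 2 (hqpos (n + 1)).le h2
  have hq4 : ∀ n, 4 ≤ q n := by
    intro n
    induction n with
    | zero => exact h38a
    | succ m ih => nlinarith [hstep m]
  have hq16 : ∀ n, 16 * q n ≤ q (n + 1) := by
    intro n; nlinarith [hstep n, hq4 n]
  have hsum : ∀ j, ∑ n ∈ Finset.range (j + 1), q n ≤ 2 * q j := by
    intro j
    induction j with
    | zero => simp; linarith [hq4 0]
    | succ m ih =>
        rw [Finset.sum_range_succ]
        linarith [hq16 m, hqpos (m + 1)]
  have hpql : ∀ n, (p n : ℝ) ≤ q n / 4 := by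
    intro n; rw [hp n]; exact Nat.floor_le (by linarith [hqpos n])
  have hpqg : ∀ n, q n / 4 - 1 < (p n : ℝ) := by
    intro n; rw [hp n]; exact Nat.sub_one_lt_floor _
  -- main part
  intro k hk
  obtain ⟨k', rfl⟩ : ∃ k', k = k' + 1 := ⟨k - 1, (Nat.succ_pred_eq_of_pos hk).symm⟩
  have hak1 : (1 : ℝ) < a (k' + 1) := by linarith [ha4 (k' + 1)]
  have hδk := hδ (k' + 1)
  set r : ℝ := a (k' + 1) ^ (1 - δ (k' + 1) / 16) with hr_def
  have hrpos : 0 < r := Real.rpow_pos_of_pos (ha _) _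
  have hr2 : 2 ≤ r := by
    have h1 : a (k' + 1) ^ ((1 : ℝ) / 2) ≤ r :=
      Real.rpow_le_rpow_of_exponent_le hak1.le (by linarith [hδk.2])
    have h2 : (4 : ℝ) ^ ((1 : ℝ) / 2) ≤ a (k' + 1) ^ ((1 : ℝ) / 2) :=
      Real.rpow_le_rpow (by norm_num) (ha4 _) (by norm_num)
    have h3 : (4 : ℝ) ^ ((1 : ℝ) / 2) = 2 := by
      rw [← Real.sqrt_eq_rpow, show (4 : ℝ) = 2 ^ 2 by norm_num,
        Real.sqrt_sq (by norm_num : (0:ℝ) ≤ 2)]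
    linarith
  have hrk : r < a (k' + 1) := by
    have h := Real.rpow_lt_rpow_of_exponent_lt hak1
      (show 1 - δ (k' + 1) / 16 < 1 by linarith [hδk.1])
    rwa [Real.rpow_one] at h
  -- evaluate g r as a finite product
  have hgr : g r = r ^ 3 * ∏ n ∈ Finset.range (k' + 1),
      (if a n ≤ r then (1 + r / a n) ^ (2 * p n) else 1) := by
    rw [hg r]
    congr 1
    refine tprod_eq_prod ?_
    intro b hb
    have hkb : k' + 1 ≤ b := Nat.le_of_not_lt (by simpa [Finset.mem_range] using hb)
    rw [if_neg (not_le.mpr (lt_of_lt_of_le hrk (hmono.monotone hkb)))]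
  -- upper bound for g r
  set M : ℕ := ∑ n ∈ Finset.range (k' + 1), 4 * p n with hM_def
  have hprod_nonneg : (0:ℝ) ≤ ∏ n ∈ Finset.range (k' + 1),
      (if a n ≤ r then (1 + r / a n) ^ (2 * p n) else 1) := by
    refine Finset.prod_nonneg fun n _ => ?_
    split_ifs with h
    · exact pow_nonneg (by have := div_nonneg hrpos.le (ha n).le; linarith) _
    · norm_num
  have hprod_pos : (0:ℝ) < ∏ n ∈ Finset.range (k' + 1),
      (if a n ≤ r then (1 + r / a n) ^ (2 * p n) else 1) := by
    refine Finset.prod_pos fun n _ => ?_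
    split_ifs with h
    · exact pow_pos (by have := div_nonneg hrpos.le (ha n).le; linarith) _
    · norm_num
  have hgr_le : g r ≤ r ^ (3 + M) := by
    rw [hgr, pow_add]
    refine mul_le_mul_of_nonneg_left ?_ (pow_nonneg hrpos.le 3)
    rw [hM_def, ← Finset.prod_pow_eq_pow_sum]
    refine Finset.prod_le_prod ?_ ?_
    · intro n _
      split_ifs with h
      · exact pow_nonneg (by have := div_nonneg hrpos.le (ha n).le; linarith) _
      · norm_num
    · intro n _
      split_ifs with h
      · have han : 1 ≤ a n := by linarith [ha4 n]
        have h1 : r / a n ≤ r := div_le_self hrpos.le han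
        have h2 : 1 + r / a n ≤ r ^ 2 := by nlinarith
        calc (1 + r / a n) ^ (2 * p n) ≤ (r ^ 2) ^ (2 * p n) :=
              pow_le_pow_left₀ (by positivity) h2 _
          _ = r ^ (4 * p n) := by rw [← pow_mul]; ring_nf
      · exact one_le_pow₀ (by linarith)
  have hgrpos : 0 < g r := by
    exact hgr ▸ mul_pos (pow_pos hrpos 3) hprod_pos
  have hLle : Real.log (g r) ≤ ((3 + M : ℕ) : ℝ) * Real.log r := by
    calc Real.log (g r) ≤ Real.log (r ^ (3 + M)) := Real.log_le_log hgrpos hgr_le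
      _ = ((3 + M : ℕ) : ℝ) * Real.log r := Real.log_pow _ _
  have hMle : (M : ℝ) ≤ 2 * q k' := by
    rw [hM_def]
    push_cast
    calc (∑ n ∈ Finset.range (k' + 1), (4 * (p n : ℝ)))
        ≤ ∑ n ∈ Finset.range (k' + 1), q n :=
          Finset.sum_le_sum fun n _ => by linarith [hpql n]
      _ ≤ 2 * q k' := hsum k'
  have hlogr : Real.log r ≤ Real.log (a (k' + 1)) := Real.log_le_log hrpos hrk.le
  have hloga0 : 0 ≤ Real.log (a (k' + 1)) := Real.log_nonneg hak1.le
  have h39' := h39 k'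
  rw [← hqpow4 k'] at h39'
  have hchain : ((3 + M : ℕ) : ℝ) * Real.log r ≤ a (k' + 1) ^ (δ (k' + 1) / 16) := by
    have hMq : ((3 + M : ℕ) : ℝ) ≤ 3 * q k' := by
      push_cast; linarith [hq4 k', hMle]
    have h0 : (0:ℝ) ≤ ((3 + M : ℕ) : ℝ) := by positivity
    have e1 : ((3 + M : ℕ) : ℝ) * Real.log r ≤ (3 * q k') * Real.log (a (k' + 1)) :=
      calc ((3 + M : ℕ) : ℝ) * Real.log r
          ≤ ((3 + M : ℕ) : ℝ) * Real.log (a (k' + 1)) :=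
            mul_le_mul_of_nonneg_left hlogr h0
        _ ≤ (3 * q k') * Real.log (a (k' + 1)) :=
            mul_le_mul_of_nonneg_right hMq hloga0
    have e2 : (3 * q k') * Real.log (a (k' + 1)) ≤ (q k' ^ (4:ℕ)) * Real.log (a (k' + 1)) := by
      have h34 : 3 * q k' ≤ q k' ^ (4:ℕ) := by
        have h1 : (4:ℝ) ^ (3:ℕ) ≤ q k' ^ (3:ℕ) := pow_le_pow_left₀ (by norm_num) (hq4 k') 3
        calc 3 * q k' ≤ 64 * q k' := by linarith [hqpos k']
          _ = (4:ℝ) ^ (3:ℕ) * q k' := by norm_num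
          _ ≤ q k' ^ (3:ℕ) * q k' := mul_le_mul_of_nonneg_right h1 (hqpos k').le
          _ = q k' ^ (4:ℕ) := by ring
      exact mul_le_mul_of_nonneg_right h34 hloga0
    linarith
  -- a^(δ/16) ≤ sqrt (p (k'+1))
  have hq64 : 64 ≤ q (k' + 1) := by nlinarith [hstep k', hq4 k']
  have hpk8 : q (k' + 1) / 8 ≤ (p (k' + 1) : ℝ) := by linarith [hpqg (k' + 1)]
  have hsq : Real.sqrt (q (k' + 1)) ≤ (p (k' + 1) : ℝ) := by
    have h0 : q (k' + 1) ≤ (q (k' + 1) / 8) ^ 2 := by nlinarith [hq64]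
    have h1 : Real.sqrt (q (k' + 1)) ≤ Real.sqrt ((q (k' + 1) / 8) ^ 2) :=
      Real.sqrt_le_sqrt h0
    rw [Real.sqrt_sq (by linarith)] at h1
    linarith
  have hfinal : a (k' + 1) ^ (δ (k' + 1) / 16) ≤ Real.sqrt (p (k' + 1)) := by
    have hx : (0:ℝ) ≤ a (k' + 1) ^ (δ (k' + 1) / 16) :=
      (Real.rpow_pos_of_pos (ha _) _).le
    have h4 : q (k' + 1) = (a (k' + 1) ^ (δ (k' + 1) / 16)) ^ (4 : ℕ) := by
      simp only [hq_def]
      rw [← Real.rpow_natCast (a (k' + 1) ^ (δ (k' + 1) / 16)) 4,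
        ← Real.rpow_mul (ha _).le]
      congr 1
      ring
    have heq : Real.sqrt (Real.sqrt (q (k' + 1))) = a (k' + 1) ^ (δ (k' + 1) / 16) := by
      rw [h4, show ((a (k' + 1) ^ (δ (k' + 1) / 16)) ^ (4:ℕ))
          = ((a (k' + 1) ^ (δ (k' + 1) / 16)) ^ 2) ^ 2 by ring,
        Real.sqrt_sq (by positivity), Real.sqrt_sq hx]
    rw [← heq]
    exact Real.sqrt_le_sqrt hsq
  -- lower bound for log (g (a (k'+1)))
  have hgl : (p (k' + 1) : ℝ) ≤ Real.log (g (a (k' + 1))) := by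
    have hgs : g (a (k' + 1)) = (a (k' + 1)) ^ 3 * ∏ n ∈ Finset.range (k' + 2),
        (if a n ≤ a (k' + 1) then (1 + a (k' + 1) / a n) ^ (2 * p n) else 1) := by
      rw [hg (a (k' + 1))]
      congr 1
      refine tprod_eq_prod ?_
      intro b hb
      have hkb : k' + 2 ≤ b := Nat.le_of_not_lt (by simpa [Finset.mem_range] using hb)
      have hlt : a (k' + 1) < a b := hmono (by omega)
      rw [if_neg (not_le.mpr hlt)]
    have hone : ∀ n ∈ Finset.range (k' + 2),
        (1:ℝ) ≤ (if a n ≤ a (k' + 1) then (1 + a (k' + 1) / a n) ^ (2 * p n) else 1) := by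
      intro n _
      split_ifs with h
      · refine one_le_pow₀ ?_
        have : 0 ≤ a (k' + 1) / a n := div_nonneg (ha _).le (ha n).le
        linarith
      · exact le_rfl
    have hk_mem : k' + 1 ∈ Finset.range (k' + 2) := by simp
    have hfk : (if a (k' + 1) ≤ a (k' + 1)
        then (1 + a (k' + 1) / a (k' + 1)) ^ (2 * p (k' + 1)) else 1)
        = (2:ℝ) ^ (2 * p (k' + 1)) := by
      rw [if_pos le_rfl, div_self (ha (k' + 1)).ne']
      norm_num
    have hprod_ge : (2:ℝ) ^ (2 * p (k' + 1)) ≤ ∏ n ∈ Finset.range (k' + 2),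
        (if a n ≤ a (k' + 1) then (1 + a (k' + 1) / a n) ^ (2 * p n) else 1) := by
      have h := Finset.prod_le_prod (s := Finset.range (k' + 2))
        (f := fun n => if n = k' + 1 then (2:ℝ) ^ (2 * p (k' + 1)) else 1)
        (g := fun n => if a n ≤ a (k' + 1) then (1 + a (k' + 1) / a n) ^ (2 * p n) else 1)
        (fun i _ => by
          split_ifs with h'
          · positivity
          · norm_num)
        (fun i hi => by
          by_cases hik : i = k' + 1
          · subst hik
            simp only [if_pos rfl]
            exact le_of_eq hfk.symm
          · rw [if_neg hik]
            exact hone i hi)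
      rwa [Finset.prod_ite_eq' (Finset.range (k' + 2)) (k' + 1)
        (fun _ => (2:ℝ) ^ (2 * p (k' + 1))), if_pos hk_mem] at h
    have hprodpos : (0:ℝ) < ∏ n ∈ Finset.range (k' + 2),
        (if a n ≤ a (k' + 1) then (1 + a (k' + 1) / a n) ^ (2 * p n) else 1) := by
      refine Finset.prod_pos fun n _ => ?_
      split_ifs with h
      · exact pow_pos (by have := div_nonneg (ha (k'+1)).le (ha n).le; linarith) _
      · norm_num
    have hs1 : (1:ℝ) ≤ (a (k' + 1)) ^ 3 := one_le_pow₀ (by linarith [ha4 (k' + 1)])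
    have hgge : (2:ℝ) ^ (2 * p (k' + 1)) ≤ g (a (k' + 1)) := by
      rw [hgs]
      have h2 : (1:ℝ) * (∏ n ∈ Finset.range (k' + 2),
          (if a n ≤ a (k' + 1) then (1 + a (k' + 1) / a n) ^ (2 * p n) else 1))
          ≤ (a (k' + 1)) ^ 3 * (∏ n ∈ Finset.range (k' + 2),
          (if a n ≤ a (k' + 1) then (1 + a (k' + 1) / a n) ^ (2 * p n) else 1)) :=
        mul_le_mul_of_nonneg_right hs1 hprodpos.le
      rw [one_mul] at h2
      exact le_trans hprod_ge h2
    have hlog2 : Real.log ((2:ℝ) ^ (2 * p (k' + 1))) ≤ Real.log (g (a (k' + 1))) :=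
      Real.log_le_log (by positivity) hgge
    rw [Real.log_pow] at hlog2
    have hl2 : (1:ℝ)/2 ≤ Real.log 2 := by
      have := Real.log_two_gt_d9; linarith
    have : (p (k' + 1) : ℝ) ≤ ((2 * p (k' + 1) : ℕ) : ℝ) * Real.log 2 := by
      push_cast
      nlinarith [Nat.cast_nonneg (α := ℝ) (p (k' + 1))]
    linarith
  -- combine
  have hL : Real.log (g r) ≤ Real.sqrt (p (k' + 1)) :=
    le_trans hLle (le_trans hchain hfinal)
  calc Real.sqrt (p (k' + 1)) * Real.log (g r)
      ≤ Real.sqrt (p (k' + 1)) * Real.sqrt (p (k' + 1)) :=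
        mul_le_mul_of_nonneg_left hL (Real.sqrt_nonneg _)
    _ = (p (k' + 1) : ℝ) := Real.mul_self_sqrt (by positivity)
    _ ≤ Real.log (g (a (k' + 1))) := hgl
end

section
/- Let f be a transcendental entire function with f((−∞,0]) ⊆ (−∞,0], let g be strictly increasing with m(r,f) ≤ g(r) < M(r,f) for r ≥ 0, r₀ = 10, r_{n+1} = g(rₙ). Suppose there is a sequence (N_k) of positive integers with f^{N₁}((−r₂,0]) ⊆ (−r_{N₁},0] and f^{N_k}((−r_{N₁+⋯+N_{k−1}+2k},0]) ⊆ (−r_{N₁+⋯+N_k},0] for k ≥ 2. Then A(f) ∩ (−∞,0] = ∅, where A(f) = ⋃_{n} f^{−n}({z : |f^j(z)| ≥ M^j(10,f) for all j ∈ ℕ}). -/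
noncomputable def maxMod (f : ℂ → ℂ) (r : ℝ) : ℝ :=
  sSup ((fun z => ‖f z‖) '' Metric.sphere (0 : ℂ) r)

noncomputable def minMod (f : ℂ → ℂ) (r : ℝ) : ℝ :=
  sInf ((fun z => ‖f z‖) '' Metric.sphere (0 : ℂ) r)

lemma maxMod_bdd {f : ℂ → ℂ} (hf : Continuous f) (r : ℝ) :
    BddAbove ((fun z => ‖f z‖) '' Metric.sphere (0 : ℂ) r) :=
  (isCompact_sphere (0 : ℂ) r).bddAbove_image (continuous_norm.comp hf).continuousOn

lemma self_mem_sphere {r : ℝ} (hr : 0 ≤ r) : (r : ℂ) ∈ Metric.sphere (0 : ℂ) r := by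
  simp [Metric.mem_sphere, Complex.dist_eq, abs_of_nonneg hr]

lemma abs_le_maxMod {f : ℂ → ℂ} (hf : Continuous f) (z : ℂ) :
    ‖f z‖ ≤ maxMod f ‖z‖ :=
  le_csSup (maxMod_bdd hf _) ⟨z, by simp [Metric.mem_sphere, Complex.dist_eq], rfl⟩

lemma maxMod_nonneg {f : ℂ → ℂ} (hf : Continuous f) {r : ℝ} (hr : 0 ≤ r) :
    0 ≤ maxMod f r :=
  le_trans (norm_nonneg _)
    (le_csSup (maxMod_bdd hf r) ⟨(r : ℂ), self_mem_sphere hr, rfl⟩)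

lemma maxMod_mono {f : ℂ → ℂ} (hf : Differentiable ℂ f) {a b : ℝ} (ha : 0 ≤ a)
    (hab : a ≤ b) : maxMod f a ≤ maxMod f b := by
  rcases eq_or_lt_of_le hab with rfl | hlt
  · exact le_rfl
  · have hb : 0 < b := ha.trans_lt hlt
    have hne : ((fun z => ‖f z‖) '' Metric.sphere (0 : ℂ) a).Nonempty :=
      ⟨_, ⟨(a : ℂ), self_mem_sphere ha, rfl⟩⟩
    refine csSup_le hne ?_
    rintro val ⟨z, hz, rfl⟩
    have hza : ‖z‖ = a := by
      simpa [Metric.mem_sphere, Complex.dist_eq] using hz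
    have hcl : z ∈ closure (Metric.ball (0 : ℂ) b) := by
      rw [closure_ball (0 : ℂ) hb.ne']
      simp only [Metric.mem_closedBall, Complex.dist_eq, sub_zero]
      rw [show ‖z‖ = a from hza]; exact hab
    have hfr : ∀ w ∈ frontier (Metric.ball (0 : ℂ) b), ‖f w‖ ≤ maxMod f b := by
      rw [frontier_ball (0 : ℂ) hb.ne']
      intro w hw
      have hwb : ‖w‖ = b := by
        simpa [Metric.mem_sphere, Complex.dist_eq] using hw
      have h := abs_le_maxMod hf.continuous w
      rw [hwb] at h
      simpa using h
    have := Complex.norm_le_of_forall_mem_frontier_norm_le Metric.isBounded_ball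
      hf.diffContOnCl hfr hcl
    simpa using this

/-- Lemma 3.1: under the lagging hypotheses, no point of (-∞,0] is fast escaping. -/
theorem stmt15 (f : ℂ → ℂ) (hf : Differentiable ℂ f)
    (htrans : ¬ ∃ P : Polynomial ℂ, ∀ z, f z = P.eval z)
    (hreal : ∀ x : ℝ, x ≤ 0 → ∃ y : ℝ, y ≤ 0 ∧ f (x : ℂ) = (y : ℂ))
    (g : ℝ → ℝ) (hmono : StrictMonoOn g (Set.Ici 0))
    (hg3 : ∀ r : ℝ, 10 ≤ r → r ^ 3 ≤ g r)
    (hgm : ∀ r : ℝ, 0 < r → minMod f r ≤ g r ∧ g r < maxMod f r)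
    (rs : ℕ → ℝ) (h0 : rs 0 = 10) (hsucc : ∀ n, rs (n+1) = g (rs n))
    (N : ℕ → ℕ) (hNpos : ∀ k, 1 ≤ k → 1 ≤ N k)
    (hstep1 : ∀ x : ℝ, -(rs 2) < x → x ≤ 0 →
      ∃ y : ℝ, f^[N 1] (x : ℂ) = (y : ℂ) ∧ -(rs (N 1)) < y ∧ y ≤ 0)
    (hstepk : ∀ k, 2 ≤ k →
      ∀ x : ℝ, -(rs ((∑ j ∈ Finset.Icc 1 (k-1), N j) + 2*k)) < x → x ≤ 0 →
        ∃ y : ℝ, f^[N k] (x : ℂ) = (y : ℂ) ∧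
          -(rs (∑ j ∈ Finset.Icc 1 k, N j)) < y ∧ y ≤ 0) :
    ∀ x : ℝ, x ≤ 0 →
      ¬ ∃ n : ℕ, ∀ j : ℕ, 1 ≤ j →
        (fun r => maxMod f r)^[j] 10 ≤ ‖f^[j] (f^[n] (x : ℂ))‖ := by
  intro x hx
  rintro ⟨n, hfast⟩
  -- real iterates of a nonpositive real stay nonpositive real
  have hrealIter : ∀ (i : ℕ) (w : ℝ), w ≤ 0 → ∃ v : ℝ, v ≤ 0 ∧ f^[i] (w : ℂ) = (v : ℂ) := by
    intro i
    induction i with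
    | zero => intro w hw; exact ⟨w, hw, rfl⟩
    | succ i ih =>
      intro w hw
      obtain ⟨v, hv, hveq⟩ := ih w hw
      obtain ⟨v', hv', hveq'⟩ := hreal v hv
      exact ⟨v', hv', by rw [Function.iterate_succ_apply', hveq, hveq']⟩
  obtain ⟨u₀, hu₀le, hu₀⟩ := hrealIter n x hx
  -- fast escape in terms of the real orbit of u₀
  have hfastR : ∀ (T : ℕ), 1 ≤ T → ∀ z : ℝ, z ≤ 0 → f^[T] (u₀ : ℂ) = (z : ℂ) →
      (fun r => maxMod f r)^[T] 10 ≤ -z := by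
    intro T hT z hzle hzeq
    have h := hfast T hT
    rw [hu₀, hzeq, Complex.norm_real, Real.norm_eq_abs, abs_of_nonpos hzle] at h
    exact h
  -- iterate unfolding helper
  have hit : ∀ (j : ℕ) (B : ℝ),
      (fun r => maxMod f r)^[j+1] B = maxMod f ((fun r => maxMod f r)^[j] B) := by
    intro j B; rw [Function.iterate_succ_apply']
  -- basic rs facts
  have hcube : ∀ v : ℝ, 10 ≤ v → 100 * v ≤ v ^ 3 := by
    intro v hv
    nlinarith [mul_nonneg (by linarith : (0:ℝ) ≤ v - 10) (sq_nonneg v),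
      mul_nonneg (by linarith : (0:ℝ) ≤ v - 10) (by linarith : (0:ℝ) ≤ v)]
  have hrs10 : ∀ i, (10:ℝ) ≤ rs i := by
    intro i
    induction i with
    | zero => rw [h0]
    | succ i ih =>
      rw [hsucc]
      have h3 := hg3 (rs i) ih
      have h4 := hcube (rs i) ih
      linarith
  have hrspos : ∀ i, (0:ℝ) < rs i := fun i => lt_of_lt_of_le (by norm_num) (hrs10 i)
  have hrsmono : Monotone rs := by
    apply monotone_nat_of_le_succ
    intro i
    rw [hsucc]
    have h3 := hg3 (rs i) (hrs10 i)
    have h4 := hcube (rs i) (hrs10 i)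
    linarith [hrs10 i]
  have hrslin : ∀ i : ℕ, 10 + (i : ℝ) ≤ rs i := by
    intro i
    induction i with
    | zero => rw [h0]; norm_num
    | succ i ih =>
      rw [hsucc]
      have h3 := hg3 (rs i) (hrs10 i)
      have h4 := hcube (rs i) (hrs10 i)
      have h10 := hrs10 i
      push_cast
      linarith
  -- maxMod facts
  have hMgt : ∀ v : ℝ, 10 ≤ v → v < maxMod f v ∧ 10 ≤ maxMod f v := by
    intro v hv
    have hpos : (0:ℝ) < v := by linarith
    have h1 := (hgm v hpos).2
    have h2 := hg3 v hv
    have h4 := hcube v hv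
    constructor
    · linarith
    · linarith
  have hMit10 : ∀ j, (10:ℝ) ≤ (fun r => maxMod f r)^[j] 10 := by
    intro j
    induction j with
    | zero => norm_num
    | succ j ih => rw [hit]; exact (hMgt _ ih).2
  have hMstrict : StrictMono (fun j => (fun r => maxMod f r)^[j] (10:ℝ)) := by
    apply strictMono_nat_of_lt_succ
    intro j
    rw [hit]
    exact (hMgt _ (hMit10 j)).1
  have hgle : ∀ a b : ℝ, 0 ≤ a → a ≤ b → g a ≤ g b := by
    intro a b ha hab
    rcases eq_or_lt_of_le hab with rfl | h
    · exact le_rfl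
    · exact (hmono (Set.mem_Ici.mpr ha) (Set.mem_Ici.mpr (ha.trans hab)) h).le
  have hProp : ∀ (s i j : ℕ), rs i ≤ (fun r => maxMod f r)^[j] 10 →
      rs (i + s) ≤ (fun r => maxMod f r)^[j + s] 10 := by
    intro s
    induction s with
    | zero => intro i j h; simpa using h
    | succ s ih =>
      intro i j h
      have h2 := ih i j h
      have h10 : (10:ℝ) ≤ (fun r => maxMod f r)^[j + s] 10 := hMit10 _
      have e1 : i + (s+1) = (i + s) + 1 := by omega
      have e2 : j + (s+1) = (j + s) + 1 := by omega
      rw [e1, hsucc, e2, hit]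
      have h3 : g (rs (i+s)) ≤ g ((fun r => maxMod f r)^[j+s] 10) :=
        hgle _ _ (le_trans (by norm_num) (hrs10 _)) h2
      have h4 := (hgm _ (lt_of_lt_of_le (by norm_num : (0:ℝ) < 10) h10)).2
      linarith
  have hL2 : ∀ i, rs i ≤ (fun r => maxMod f r)^[i] 10 := by
    intro i
    have h := hProp i 0 0 (by simp [h0])
    simpa using h
  -- partial sum facts
  have hSsucc : ∀ k : ℕ, (∑ j ∈ Finset.Icc 1 (k+1), N j)
      = (∑ j ∈ Finset.Icc 1 k, N j) + N (k+1) := by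
    intro k
    exact Finset.sum_Icc_succ_top (by omega) N
  have hS1 : ∀ k : ℕ, 1 ≤ k → 1 ≤ ∑ j ∈ Finset.Icc 1 k, N j := by
    intro k hk
    calc 1 ≤ N 1 := hNpos 1 le_rfl
    _ ≤ ∑ j ∈ Finset.Icc 1 k, N j :=
        Finset.single_le_sum (fun i _ => Nat.zero_le _) (Finset.mem_Icc.mpr ⟨le_rfl, hk⟩)
  -- entry point
  obtain ⟨m, hm⟩ := exists_nat_gt (-u₀)
  set d : ℕ := ∑ j ∈ Finset.Icc 1 (m+1), N j with hd
  have hd1 : 1 ≤ d := hS1 (m+1) (by omega)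
  have hentry : -(rs (d + 2*(m+2))) < u₀ := by
    have h1 := hrslin (d + 2*(m+2))
    have h2 : (m : ℝ) ≤ ((d + 2*(m+2) : ℕ) : ℝ) := by
      push_cast
      have : (0:ℝ) ≤ (d : ℝ) := Nat.cast_nonneg _
      linarith
    linarith
  -- the chain of dips
  have chain : ∀ k : ℕ, m + 2 ≤ k → ∃ (T : ℕ) (y : ℝ), 1 ≤ T ∧
      T + d = (∑ j ∈ Finset.Icc 1 k, N j) ∧ y ≤ 0 ∧
      -(rs (∑ j ∈ Finset.Icc 1 k, N j)) < y ∧ f^[T] (u₀ : ℂ) = (y : ℂ) := by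
    intro k hk
    induction k, hk using Nat.le_induction with
    | base =>
      have hst := hstepk (m+2) (by omega)
      rw [show m + 2 - 1 = m + 1 from by omega] at hst
      obtain ⟨y, hyeq, hylb, hyle⟩ := hst u₀ hentry hu₀le
      refine ⟨N (m+2), y, hNpos _ (by omega), ?_, hyle, ?_, hyeq⟩
      · rw [show m + 2 = (m+1) + 1 from by omega, hSsucc (m+1), ← hd]
        omega
      · exact hylb
    | succ k hk ih =>
      obtain ⟨T, y, hT1, hTd, hyle, hylb, hyeq⟩ := ih
      have hst := hstepk (k+1) (by omega)
      rw [show k + 1 - 1 = k from by omega] at hst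
      have hlb2 : -(rs ((∑ j ∈ Finset.Icc 1 k, N j) + 2*(k+1))) < y := by
        have hle : (∑ j ∈ Finset.Icc 1 k, N j) ≤ (∑ j ∈ Finset.Icc 1 k, N j) + 2*(k+1) := by
          omega
        have := hrsmono hle
        linarith
      obtain ⟨y', hy'eq, hy'lb, hy'le⟩ := hst y hlb2 hyle
      refine ⟨N (k+1) + T, y', by omega, ?_, hy'le, hy'lb, ?_⟩
      · rw [hSsucc k]; omega
      · rw [Function.iterate_add_apply, hyeq]
        exact hy'eq
  -- pick k and the two dips
  set k : ℕ := max (m+2) d with hkdef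
  have hk1 : m + 2 ≤ k := le_max_left _ _
  have hk2 : d ≤ k := le_max_right _ _
  obtain ⟨T, y, hT1, hTd, hyle, hylb, hyeq⟩ := chain k hk1
  obtain ⟨T', y', hT1', hTd', hy'le, hy'lb, hy'eq⟩ := chain (k+1) (by omega)
  by_cases hNk : N (k+1) ≤ 2*(k+1)
  · -- Case 1: repeat stage k+1 forever
    have loop : ∀ i : ℕ, ∃ z : ℝ, z ≤ 0 ∧
        -(rs (∑ j ∈ Finset.Icc 1 (k+1), N j)) < z ∧
        f^[T' + i * N (k+1)] (u₀ : ℂ) = (z : ℂ) := by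
      intro i
      induction i with
      | zero => exact ⟨y', hy'le, hy'lb, by simpa using hy'eq⟩
      | succ i ih =>
        obtain ⟨z, hzle, hzlb, hzeq⟩ := ih
        have hst := hstepk (k+1) (by omega)
        rw [show k + 1 - 1 = k from by omega] at hst
        have hlb2 : -(rs ((∑ j ∈ Finset.Icc 1 k, N j) + 2*(k+1))) < z := by
          have hle : (∑ j ∈ Finset.Icc 1 (k+1), N j)
              ≤ (∑ j ∈ Finset.Icc 1 k, N j) + 2*(k+1) := by
            rw [hSsucc k]; omega
          have := hrsmono hle
          linarith
        obtain ⟨z', hz'eq, hz'lb, hz'le⟩ := hst z hlb2 hzle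
        refine ⟨z', hz'le, hz'lb, ?_⟩
        have e : T' + (i+1) * N (k+1) = N (k+1) + (T' + i * N (k+1)) := by ring
        rw [e, Function.iterate_add_apply, hzeq]
        exact hz'eq
    obtain ⟨z, hzle, hzlb, hzeq⟩ := loop (∑ j ∈ Finset.Icc 1 (k+1), N j)
    have hSk1pos : 1 ≤ ∑ j ∈ Finset.Icc 1 (k+1), N j := hS1 _ (by omega)
    have hNk1pos : 1 ≤ N (k+1) := hNpos _ (by omega)
    have hTbig : 1 ≤ T' + (∑ j ∈ Finset.Icc 1 (k+1), N j) * N (k+1) := by omega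
    have hfa := hfastR _ hTbig z hzle hzeq
    have h1 : (fun r => maxMod f r)^[T' + (∑ j ∈ Finset.Icc 1 (k+1), N j) * N (k+1)] 10
        < (fun r => maxMod f r)^[∑ j ∈ Finset.Icc 1 (k+1), N j] 10 := by
      have := hL2 (∑ j ∈ Finset.Icc 1 (k+1), N j)
      linarith
    have h2 := hMstrict.lt_iff_lt.mp h1
    have h3 : (∑ j ∈ Finset.Icc 1 (k+1), N j)
        ≤ (∑ j ∈ Finset.Icc 1 (k+1), N j) * N (k+1) := by
      calc (∑ j ∈ Finset.Icc 1 (k+1), N j) = (∑ j ∈ Finset.Icc 1 (k+1), N j) * 1 :=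
            (mul_one _).symm
      _ ≤ (∑ j ∈ Finset.Icc 1 (k+1), N j) * N (k+1) :=
            Nat.mul_le_mul_left _ hNk1pos
    omega
  · -- Case 2
    push_neg at hNk
    -- growth cap along real orbit
    have cap : ∀ (i : ℕ) (w : ℝ), w ≤ 0 → ∀ B : ℝ, 0 ≤ B → -B ≤ w →
        ∃ v : ℝ, v ≤ 0 ∧ f^[i] (w : ℂ) = (v : ℂ) ∧ -((fun r => maxMod f r)^[i] B) ≤ v := by
      intro i
      induction i with
      | zero => intro w hw B hB hBw; exact ⟨w, hw, rfl, by simpa using hBw⟩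
      | succ i ih =>
        intro w hw B hB hBw
        obtain ⟨v, hvle, hveq, hvlb⟩ := ih w hw B hB hBw
        obtain ⟨v', hv'le, hv'eq⟩ := hreal v hvle
        refine ⟨v', hv'le, ?_, ?_⟩
        · rw [Function.iterate_succ_apply', hveq, hv'eq]
        · have hub := abs_le_maxMod hf.continuous ((v : ℝ) : ℂ)
          rw [hv'eq, Complex.norm_real, Real.norm_eq_abs, abs_of_nonpos hv'le,
            Complex.norm_real, Real.norm_eq_abs, abs_of_nonpos hvle] at hub
          have hmono2 : maxMod f (-v) ≤ maxMod f ((fun r => maxMod f r)^[i] B) :=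
            maxMod_mono hf (by linarith) (by linarith)
          rw [hit]
          linarith
    obtain ⟨v, hvle, hveq, hvlb⟩ := cap d y hyle (rs (∑ j ∈ Finset.Icc 1 k, N j))
      (le_of_lt (hrspos _)) (le_of_lt hylb)
    have hveq2 : f^[∑ j ∈ Finset.Icc 1 k, N j] (u₀ : ℂ) = (v : ℂ) := by
      rw [show (∑ j ∈ Finset.Icc 1 k, N j) = d + T from by omega,
        Function.iterate_add_apply, hyeq]
      exact hveq
    -- avoidance at time S k
    have hAv : v ≤ -(rs ((∑ j ∈ Finset.Icc 1 k, N j) + 2*(k+1))) := by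
      by_contra hcon
      push_neg at hcon
      have hst := hstepk (k+1) (by omega)
      rw [show k + 1 - 1 = k from by omega] at hst
      obtain ⟨y₂, hy₂eq, hy₂lb, hy₂le⟩ := hst v hcon hvle
      have htime : f^[∑ j ∈ Finset.Icc 1 (k+1), N j] (u₀ : ℂ) = (y₂ : ℂ) := by
        rw [hSsucc k, add_comm (∑ j ∈ Finset.Icc 1 k, N j) (N (k+1)),
          Function.iterate_add_apply, hveq2]
        exact hy₂eq
      have hfa := hfastR _ (hS1 (k+1) (by omega)) y₂ hy₂le htime
      have hl2 := hL2 (∑ j ∈ Finset.Icc 1 (k+1), N j)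
      linarith
    have h1 : rs ((∑ j ∈ Finset.Icc 1 k, N j) + 2*(k+1))
        ≤ (fun r => maxMod f r)^[d] (rs (∑ j ∈ Finset.Icc 1 k, N j)) := by linarith
    -- iterated maxMod is monotone
    have hItMono : ∀ (i : ℕ) (a b : ℝ), 0 ≤ a → a ≤ b →
        0 ≤ (fun r => maxMod f r)^[i] a ∧
        (fun r => maxMod f r)^[i] a ≤ (fun r => maxMod f r)^[i] b := by
      intro i
      induction i with
      | zero => intro a b ha hab; simpa using ⟨ha, hab⟩
      | succ i ih =>
        intro a b ha hab
        obtain ⟨h0a, hle⟩ := ih a b ha hab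
        constructor
        · rw [hit]; exact maxMod_nonneg hf.continuous h0a
        · rw [hit, hit]; exact maxMod_mono hf h0a hle
    have h2 : (fun r => maxMod f r)^[d] (rs (∑ j ∈ Finset.Icc 1 k, N j))
        ≤ (fun r => maxMod f r)^[d + (∑ j ∈ Finset.Icc 1 k, N j)] 10 := by
      have h := (hItMono d _ _ (le_of_lt (hrspos _)) (hL2 (∑ j ∈ Finset.Icc 1 k, N j))).2
      rwa [← Function.iterate_add_apply] at h
    set s : ℕ := N (k+1) - 2*(k+1) with hsdef
    have h3 := hProp s ((∑ j ∈ Finset.Icc 1 k, N j) + 2*(k+1))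
      (d + (∑ j ∈ Finset.Icc 1 k, N j)) (h1.trans h2)
    have hidx : (∑ j ∈ Finset.Icc 1 k, N j) + 2*(k+1) + s = ∑ j ∈ Finset.Icc 1 (k+1), N j := by
      rw [hSsucc k]; omega
    rw [hidx] at h3
    have hfa := hfastR T' hT1' y' hy'le hy'eq
    have h4 : (fun r => maxMod f r)^[T'] 10
        < (fun r => maxMod f r)^[(d + (∑ j ∈ Finset.Icc 1 k, N j)) + s] 10 := by linarith
    have h5 := hMstrict.lt_iff_lt.mp h4
    have h6 : T' + d = (∑ j ∈ Finset.Icc 1 k, N j) + 2*(k+1) + s := by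
      rw [hidx]; exact hTd'
    omega
end

section
/- Let f(z) = z³∏_{n=1}^∞ (1 + z/aₙ)^(2pₙ) with aₙ > 0 strictly increasing, a_{n+1} > aₙ², 2pₙ ≤ aₙ^(1/2)/2, and let r ∈ [R, a_k^(1/2)) where no aⱼ with j ≠ k lies near r (conditions (3.25)). Then M(r, f) = f(r) < e² · r^(a_{k−1}^(δ_{k−1})) · (1 + r/a_k)^(a_k^(δ_k)), and if furthermore r < a_k^(1/2) then M(r, f) < e³ · r^(r^(δ_k)), so that (log log M(r))/(log r) ≤ δ_k + 2 (log log r)/(log r). -/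
open Real Filter Finset

set_option maxHeartbeats 1000000 in
/-- Estimate (3.26) and its consequences for log log M(r)/log r. -/
theorem stmt19 (a δ : ℕ → ℝ) (p : ℕ → ℕ) (f : ℂ → ℂ)
    (ha : ∀ n, 0 < a n) (hmono : StrictMono a)
    (hδ : ∀ n, 0 < δ n ∧ δ n < 1/2)
    (hsq : ∀ n, (a n)^2 < a (n+1))
    (h4 : 4 ≤ a 0 ^ (δ 0 / 4))
    (h16 : ∀ n, 16 * a n ^ δ n < a (n+1) ^ (δ (n+1) / 2))
    (hp : ∀ n, p n = Nat.floor (a n ^ (δ n / 4) / 4))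
    (hphalf : ∀ n, 2 * (p n : ℝ) ≤ a n ^ ((1:ℝ)/2) / 2)
    (hf : ∀ z : ℂ, f z = z^3 * ∏' n : ℕ, (1 + z / (a n : ℂ)) ^ (2 * p n))
    (k : ℕ) (hk : 1 ≤ k) (r : ℝ) (hr : 1000 ≤ r)
    (hrk : r < Real.sqrt (a k)) (hrk1 : r ^ 2 ≤ a (k+1))
    (hlow : a (k-1) ^ δ (k-1) ≤ r ^ δ k) :
    maxMod f r = ‖f (r : ℂ)‖ ∧
    ‖f (r : ℂ)‖
      < Real.exp 2 * r ^ (a (k-1) ^ δ (k-1)) * (1 + r / a k) ^ (a k ^ δ k) ∧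
    ‖f (r : ℂ)‖ < Real.exp 3 * r ^ (r ^ δ k) ∧
    Real.log (Real.log (maxMod f r)) / Real.log r
      ≤ δ k + 2 * Real.log (Real.log r) / Real.log r := by
  have hr0 : (0:ℝ) < r := by linarith
  -- log r ≥ 6
  have hlgr6 : (6:ℝ) ≤ Real.log r := by
    rw [Real.le_log_iff_exp_le hr0]
    have h1 : Real.exp 6 = Real.exp 1 ^ (6:ℕ) := by
      rw [← Real.exp_nat_mul]; norm_num
    have h2 : Real.exp 1 ^ (6:ℕ) ≤ (3:ℝ) ^ (6:ℕ) := by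
      apply pow_le_pow_left₀ (Real.exp_pos 1).le
      linarith [Real.exp_one_lt_d9]
    rw [h1]; nlinarith [h2]
  have hlgr0 : (0:ℝ) < Real.log r := by linarith
  -- a 0 ≥ 4, hence all a n ≥ 4
  have ha1 : (1:ℝ) ≤ a 0 := by
    by_contra h
    push_neg at h
    have := Real.rpow_le_one (ha 0).le h.le (by linarith [(hδ 0).1] : (0:ℝ) ≤ δ 0 / 4)
    linarith
  have ha04 : (4:ℝ) ≤ a 0 := by
    have h1 : a 0 ^ (δ 0 / 4) ≤ a 0 ^ (1:ℝ) :=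
      Real.rpow_le_rpow_of_exponent_le ha1 (by linarith [(hδ 0).2])
    rw [Real.rpow_one] at h1; linarith
  have ha4 : ∀ n, (4:ℝ) ≤ a n := fun n => ha04.trans (hmono.monotone (Nat.zero_le n))
  have ha1n : ∀ n, (1:ℝ) ≤ a n := fun n => by linarith [ha4 n]
  -- b n := a n ^ δ n
  set b : ℕ → ℝ := fun n => a n ^ δ n with hbdef
  have hb0 : ∀ n, 0 < b n := fun n => Real.rpow_pos_of_pos (ha n) _
  have hb16 : ∀ n, 16 * b n ≤ b (n+1) := by
    intro n
    have h1 := h16 n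
    have h2 : a (n+1) ^ (δ (n+1) / 2) ≤ a (n+1) ^ (δ (n+1)) :=
      Real.rpow_le_rpow_of_exponent_le (ha1n _) (by linarith [(hδ (n+1)).1])
    simp only [hbdef]; linarith
  have hbstep : ∀ m j, b m * 16 ^ j ≤ b (m + j) := by
    intro m j
    induction j with
    | zero => simp
    | succ j ih =>
      have h1 := hb16 (m + j)
      calc b m * 16 ^ (j+1) = (b m * 16 ^ j) * 16 := by ring
        _ ≤ b (m + j) * 16 := by nlinarith
        _ ≤ b (m + (j+1)) := by rw [show m + (j+1) = (m+j)+1 from rfl]; linarith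
  have hb256 : ∀ n, (256:ℝ) ≤ b n := by
    intro n
    have h1 : a 0 ^ δ 0 = (a 0 ^ (δ 0 / 4)) ^ (4:ℕ) := by
      rw [← Real.rpow_natCast (a 0 ^ (δ 0/4)) 4, ← Real.rpow_mul (ha 0).le]
      norm_num
    have h2 : (256:ℝ) ≤ b 0 := by
      have h3 : (4:ℝ)^(4:ℕ) ≤ (a 0 ^ (δ 0 / 4)) ^ (4:ℕ) := pow_le_pow_left₀ (by norm_num) h4 4
      simp only [hbdef]; rw [h1]; norm_num at h3 ⊢; linarith
    have h4' := hbstep 0 n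
    have h5 : (1:ℝ) ≤ 16 ^ n := one_le_pow₀ (by norm_num : (1:ℝ) ≤ 16)
    simp only [Nat.zero_add] at h4'
    nlinarith [hb0 0]
  -- bounds on 2 p n
  have hp2 : ∀ n, 2 * (p n : ℝ) ≤ a n ^ (δ n / 4) / 2 := by
    intro n
    have h1 : (p n : ℝ) ≤ a n ^ (δ n / 4) / 4 := by
      rw [hp n]; exact Nat.floor_le (div_nonneg (Real.rpow_nonneg (ha n).le _) (by norm_num))
    linarith
  have hp2b : ∀ n, 2 * (p n : ℝ) ≤ b n / 2 := by
    intro n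
    have h1 : a n ^ (δ n / 4) ≤ a n ^ δ n :=
      Real.rpow_le_rpow_of_exponent_le (ha1n n) (by linarith [(hδ n).1])
    have := hp2 n; simp only [hbdef]; linarith
  have hp18 : ∀ n, 2 * (p n : ℝ) ≤ a n ^ ((1:ℝ)/8) / 2 := by
    intro n
    have h1 : a n ^ (δ n / 4) ≤ a n ^ ((1:ℝ)/8) :=
      Real.rpow_le_rpow_of_exponent_le (ha1n n) (by linarith [(hδ n).2])
    have := hp2 n; linarith
  -- the log terms
  set L : ℕ → ℝ := fun n => 2 * (p n : ℝ) * Real.log (1 + r / a n) with hLdef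
  have hx1 : ∀ n, (1:ℝ) ≤ 1 + r / a n := by
    intro n; have : 0 < r / a n := div_pos hr0 (ha n); linarith
  have hLnn : ∀ n, 0 ≤ L n := by
    intro n
    exact mul_nonneg (by positivity) (Real.log_nonneg (hx1 n))
  have hlogle : ∀ n, Real.log (1 + r / a n) ≤ r / a n := by
    intro n
    have := Real.log_le_sub_one_of_pos (show (0:ℝ) < 1 + r / a n by linarith [hx1 n])
    linarith
  -- tail estimate
  have htail0 : ∀ j, a (k+1+j) ^ (-(3/8) : ℝ) ≤ (1/100) * (1/2:ℝ)^j := by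
    intro j
    induction j with
    | zero =>
      have h6 : (10:ℝ)^(6:ℕ) ≤ a (k+1) := by nlinarith [hrk1]
      have h100 : (100:ℝ) ≤ a (k+1) ^ ((3:ℝ)/8) := by
        have e1 : (100:ℝ) = ((10:ℝ)^(6:ℕ)) ^ ((1:ℝ)/3) := by
          rw [← Real.rpow_natCast 10 6, ← Real.rpow_mul (by norm_num : (0:ℝ) ≤ 10)]
          rw [show ((6:ℕ):ℝ) * ((1:ℝ)/3) = ((2:ℕ):ℝ) by push_cast; norm_num]
          rw [Real.rpow_natCast]; norm_num
        have e2 : ((10:ℝ)^(6:ℕ)) ^ ((1:ℝ)/3) ≤ ((10:ℝ)^(6:ℕ)) ^ ((3:ℝ)/8) :=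
          Real.rpow_le_rpow_of_exponent_le (by norm_num) (by norm_num)
        have e3 : ((10:ℝ)^(6:ℕ)) ^ ((3:ℝ)/8) ≤ a (k+1) ^ ((3:ℝ)/8) :=
          Real.rpow_le_rpow (by norm_num) h6 (by norm_num)
        linarith [e1 ▸ (e2.trans e3)]
      rw [show k+1+0 = k+1 from rfl, Real.rpow_neg (ha (k+1)).le]
      simp only [pow_zero, mul_one]
      rw [show (1:ℝ)/100 = ((100:ℝ))⁻¹ by norm_num]
      exact inv_anti₀ (by norm_num) h100
    | succ j ih =>
      set x := a (k+1+j) with hxdef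
      have hx0 : 0 < x := ha _
      have hsq' : x ^ (2:ℕ) ≤ a (k+1+(j+1)) := by
        rw [show k+1+(j+1) = (k+1+j)+1 from rfl]
        exact (hsq (k+1+j)).le
      have hb1 : a (k+1+(j+1)) ^ (-(3/8) : ℝ) ≤ (x^(2:ℕ)) ^ (-(3/8) : ℝ) := by
        rw [Real.rpow_neg (ha _).le, Real.rpow_neg (by positivity)]
        exact inv_anti₀ (Real.rpow_pos_of_pos (pow_pos hx0 2) _) (Real.rpow_le_rpow (pow_pos hx0 2).le hsq' (by norm_num))
      have hb2 : (x^(2:ℕ)) ^ (-(3/8) : ℝ) = (x ^ (-(3/8) : ℝ))^(2:ℕ) := by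
        rw [← Real.rpow_natCast x 2, ← Real.rpow_mul hx0.le,
            ← Real.rpow_natCast (x ^ (-(3/8) : ℝ)) 2, ← Real.rpow_mul hx0.le]
        congr 1; push_cast; ring
      have ht2 : x ^ (-(3/8) : ℝ) ≤ 1/2 := by
        have : (1/100:ℝ) * (1/2)^j ≤ 1/100 := by
          nlinarith [pow_le_one₀ (by norm_num : (0:ℝ) ≤ 1/2) (by norm_num : (1/2:ℝ) ≤ 1) (n := j)]
        linarith [ih]
      have hnn : 0 ≤ x ^ (-(3/8) : ℝ) := Real.rpow_nonneg hx0.le _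
      calc a (k+1+(j+1)) ^ (-(3/8) : ℝ) ≤ (x ^ (-(3/8) : ℝ))^(2:ℕ) := by rw [← hb2]; exact hb1
        _ = (x ^ (-(3/8) : ℝ)) * (x ^ (-(3/8) : ℝ)) := sq _
        _ ≤ ((1/100) * (1/2)^j) * (1/2) := mul_le_mul ih ht2 hnn (by positivity)
        _ = (1/100) * (1/2)^(j+1) := by ring
  -- tail bound for L
  have hLtail : ∀ j, L (j + (k+1)) ≤ (1/200) * (1/2:ℝ)^j := by
    intro j
    set m := j + (k+1) with hmdef
    have hm : k+1 ≤ m := by omega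
    have hram : r^2 ≤ a m := hrk1.trans (hmono.monotone hm)
    have hma : 0 < a m := ha m
    have hrham : r ≤ a m ^ ((1:ℝ)/2) := by
      rw [← Real.sqrt_eq_rpow]
      exact (Real.le_sqrt hr0.le hma.le).2 hram
    have h18nn : (0:ℝ) ≤ a m ^ ((1:ℝ)/8) / 2 := div_nonneg (Real.rpow_nonneg (ha m).le _) (by norm_num)
    have e1 : L m ≤ (a m ^ ((1:ℝ)/8) / 2) * (r / a m) := by
      exact mul_le_mul (hp18 m) (hlogle m) (Real.log_nonneg (hx1 m)) h18nn
    have e2 : (a m ^ ((1:ℝ)/8) / 2) * (r / a m) ≤ (a m ^ ((1:ℝ)/8) / 2) * (a m ^ ((1:ℝ)/2) / a m) := by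
      apply mul_le_mul_of_nonneg_left _ h18nn
      gcongr
    have key : a m ^ ((1:ℝ)/2) / a m = a m ^ (-(1:ℝ)/2) := by
      have h := Real.rpow_sub hma ((1:ℝ)/2) 1
      rw [Real.rpow_one] at h
      rw [← h]; norm_num
    have key2 : a m ^ ((1:ℝ)/8) * a m ^ (-(1:ℝ)/2) = a m ^ (-(3/8) : ℝ) := by
      rw [← Real.rpow_add hma]; norm_num
    have e3 : (a m ^ ((1:ℝ)/8) / 2) * (a m ^ ((1:ℝ)/2) / a m) = (1/2) * a m ^ (-(3/8) : ℝ) := by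
      rw [key, ← key2]; ring
    have e4 : a m ^ (-(3/8) : ℝ) ≤ (1/100) * (1/2:ℝ)^j := by
      have := htail0 j
      rwa [show k+1+j = j+(k+1) by omega] at this
    calc L m ≤ (a m ^ ((1:ℝ)/8) / 2) * (r / a m) := e1
      _ ≤ (a m ^ ((1:ℝ)/8) / 2) * (a m ^ ((1:ℝ)/2) / a m) := e2
      _ = (1/2) * a m ^ (-(3/8) : ℝ) := e3
      _ ≤ (1/2) * ((1/100) * (1/2:ℝ)^j) := by linarith [e4]
      _ = (1/200) * (1/2:ℝ)^j := by ring
  -- summability of L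
  have hgeo : Summable (fun j : ℕ => (1/200:ℝ) * (1/2)^j) :=
    (summable_geometric_of_lt_one (by norm_num) (by norm_num)).mul_left _
  have hLsum : Summable L :=
    (summable_nat_add_iff (k+1)).1
      (Summable.of_nonneg_of_le (fun j => hLnn _) hLtail hgeo)
  set S := ∑' n, L n with hSdef
  have hS0 : 0 ≤ S := tsum_nonneg hLnn
  have hsplit : ∑ i ∈ Finset.range (k+1), L i + ∑' j, L (j + (k+1)) = S :=
    hLsum.sum_add_tsum_nat_add (k+1)
  have hTailsum : ∑' j, L (j + (k+1)) ≤ 1/100 := by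
    have h1 : ∑' j, L (j + (k+1)) ≤ ∑' j : ℕ, (1/200:ℝ) * (1/2)^j :=
      Summable.tsum_le_tsum hLtail ((summable_nat_add_iff (k+1)).2 hLsum) hgeo
    have h2 : ∑' j : ℕ, (1/200:ℝ) * (1/2)^j = (1/200) * (1 - 1/2)⁻¹ := by
      rw [tsum_mul_left, tsum_geometric_of_lt_one (by norm_num) (by norm_num)]
    rw [h2] at h1; norm_num at h1; linarith
  -- head estimate
  set A := a (k-1) ^ δ (k-1) with hAdef
  have hAb : A = b (k-1) := rfl
  have hA256 : (256:ℝ) ≤ A := hb256 (k-1)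
  have hbsum : ∑ n ∈ Finset.range k, b n ≤ (16/15) * A := by
    have hterm : ∀ n ∈ Finset.range k, b n ≤ A * (1/16:ℝ)^(k-1-n) := by
      intro n hn
      rw [Finset.mem_range] at hn
      have h1 := hbstep n (k-1-n)
      rw [show n + (k-1-n) = k-1 by omega] at h1
      rw [hAb]
      have h2 : (0:ℝ) < 16 ^ (k-1-n) := by positivity
      rw [show A * (1/16:ℝ)^(k-1-n) = A / 16^(k-1-n) by rw [div_pow]; ring, le_div_iff₀ h2]
      exact h1
    have hgs : ∑ j ∈ Finset.range k, (1/16:ℝ)^j ≤ (1 - 1/16:ℝ)⁻¹ := by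
      have h5 := Summable.sum_le_tsum (Finset.range k) (fun i _ => by positivity)
        (summable_geometric_of_lt_one (by norm_num : (0:ℝ) ≤ 1/16) (by norm_num))
      rwa [tsum_geometric_of_lt_one (by norm_num) (by norm_num)] at h5
    calc ∑ n ∈ Finset.range k, b n
        ≤ ∑ n ∈ Finset.range k, A * (1/16:ℝ)^(k-1-n) := Finset.sum_le_sum hterm
      _ = A * ∑ n ∈ Finset.range k, (1/16:ℝ)^(k-1-n) := by rw [Finset.mul_sum]
      _ = A * ∑ j ∈ Finset.range k, (1/16:ℝ)^j := by
          rw [Finset.sum_range_reflect (fun j => (1/16:ℝ)^j) k]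
      _ ≤ A * (16/15) := by
          apply mul_le_mul_of_nonneg_left _ (by linarith)
          norm_num at hgs ⊢; linarith
      _ = (16/15) * A := by ring
  -- per-term head bound
  have hLb : ∀ n, L n ≤ (b n / 2) * Real.log r := by
    intro n
    have h2 : r / a n ≤ r / 4 := by
      apply div_le_div_of_nonneg_left hr0.le (by norm_num) (ha4 n)
    have h1r : (1:ℝ) + r / a n ≤ r := by linarith
    exact mul_le_mul (hp2b n)
      (Real.log_le_log (by linarith [hx1 n]) h1r)
      (Real.log_nonneg (hx1 n)) (div_nonneg (hb0 n).le (by norm_num))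
  have hHead : ∑ n ∈ Finset.range k, L n ≤ (8/15) * A * Real.log r := by
    calc ∑ n ∈ Finset.range k, L n
        ≤ ∑ n ∈ Finset.range k, (b n / 2) * Real.log r :=
          Finset.sum_le_sum (fun n _ => hLb n)
      _ = ∑ n ∈ Finset.range k, b n * (Real.log r / 2) :=
          Finset.sum_congr rfl (fun n _ => by ring)
      _ = (∑ n ∈ Finset.range k, b n) * (Real.log r / 2) := by rw [Finset.sum_mul]
      _ ≤ (16/15 * A) * (Real.log r / 2) :=
          mul_le_mul_of_nonneg_right hbsum (by linarith)
      _ = (8/15) * A * Real.log r := by ring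
  have hLk : L k ≤ b k * Real.log (1 + r / a k) := by
    have h1 := hp2b k
    have h2 := Real.log_nonneg (hx1 k)
    have h3 : L k = 2 * (p k : ℝ) * Real.log (1 + r / a k) := rfl
    rw [h3]
    nlinarith [hb0 k]
  have hB1 : b k * Real.log (1 + r / a k) ≤ 1 := by
    set s := Real.sqrt (a k) with hsdef
    have hs0 : 0 < s := hr0.trans hrk
    have hss : s ^ 2 = a k := Real.sq_sqrt (ha k).le
    have hbks : b k ≤ s := by
      have h1 : a k ^ δ k ≤ a k ^ ((1:ℝ)/2) :=
        Real.rpow_le_rpow_of_exponent_le (ha1n k) (by linarith [(hδ k).2])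
      rw [hsdef, Real.sqrt_eq_rpow]
      exact h1
    have h2 : b k * Real.log (1 + r / a k) ≤ b k * (r / a k) :=
      mul_le_mul_of_nonneg_left (hlogle k) (hb0 k).le
    have h3 : b k * (r / a k) ≤ s * (r / a k) :=
      mul_le_mul_of_nonneg_right hbks (div_nonneg hr0.le (ha k).le)
    have h4 : s * (r / a k) = r / s := by
      rw [← hss]; field_simp
    have h5 : r / s ≤ 1 := by
      rw [div_le_one hs0]; exact hrk.le
    linarith
  have hBnn : 0 ≤ b k * Real.log (1 + r / a k) :=
    mul_nonneg (hb0 k).le (Real.log_nonneg (hx1 k))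
  have hStot : S ≤ (8/15) * A * Real.log r + b k * Real.log (1 + r / a k) + 1/100 := by
    have h1 : ∑ i ∈ Finset.range (k+1), L i = ∑ i ∈ Finset.range k, L i + L k :=
      Finset.sum_range_succ L k
    linarith [hsplit, hHead, hLk, hTailsum, h1.symm.le, h1.le]
  -- product representation
  have hexpL : ∀ n, Real.exp (L n) = (1 + r / a n) ^ (2 * p n) := by
    intro n
    have hc : 2 * (p n : ℝ) = ((2 * p n : ℕ) : ℝ) := by push_cast; ring
    simp only [hLdef]
    rw [hc, Real.exp_nat_mul, Real.exp_log (by linarith [hx1 n])]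
  have hGprod : HasProd (fun n => (1 + r / a n) ^ (2 * p n)) (Real.exp S) := by
    have h1 := hLsum.hasSum.rexp
    rw [show (Real.exp ∘ L) = fun n => (1 + r / a n) ^ (2 * p n) from
      funext (fun n => hexpL n)] at h1
    rw [hSdef]
    exact h1
  have hfr : ‖f (r:ℂ)‖ = r^(3:ℕ) * Real.exp S := by
    have hC : HasProd (fun n => (1 + (r:ℂ) / (a n : ℂ)) ^ (2 * p n)) ((Real.exp S : ℝ) : ℂ) := by
      have h2 := hGprod.map Complex.ofRealHom.toMonoidHom Complex.continuous_ofReal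
      have h3 : (⇑Complex.ofRealHom.toMonoidHom ∘ fun n => (1 + r / a n) ^ (2 * p n))
          = fun n => (1 + (r:ℂ) / (a n : ℂ)) ^ (2 * p n) := by
        funext n
        simp only [Function.comp_apply, RingHom.toMonoidHom_eq_coe, MonoidHom.coe_coe,
          Complex.ofRealHom_eq_coe]
        push_cast
        ring
      rwa [h3] at h2
    rw [hf, hC.tprod_eq, norm_mul, norm_pow]
    rw [Complex.norm_real, Complex.norm_real, Real.norm_of_nonneg hr0.le, Real.norm_of_nonneg (Real.exp_pos S).le]
  -- upper bound on the sphere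
  have hub : ∀ z ∈ Metric.sphere (0:ℂ) r, ‖f z‖ ≤ r^(3:ℕ) * Real.exp S := by
    intro z hz
    have hzr : ‖z‖ = r := by
      rw [Metric.mem_sphere, Complex.dist_eq, sub_zero] at hz; exact hz
    rw [hf, norm_mul, norm_pow, hzr]
    have hfac : ∀ n : ℕ, ‖(1 + z / (a n:ℂ)) ^ (2 * p n)‖ ≤ (1 + r / a n) ^ (2 * p n) := by
      intro n
      rw [norm_pow]
      apply pow_le_pow_left₀ (norm_nonneg _)
      calc ‖1 + z / (a n:ℂ)‖
          ≤ ‖(1:ℂ)‖ + ‖z / (a n:ℂ)‖ := norm_add_le _ _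
        _ = 1 + r / a n := by
            rw [norm_one, norm_div, hzr, Complex.norm_real, Real.norm_of_nonneg (ha n).le]
    have hprod : ‖(∏' n, (1 + z / (a n:ℂ)) ^ (2 * p n))‖ ≤ Real.exp S := by
      by_cases hm : Multipliable (fun n => (1 + z / (a n:ℂ)) ^ (2 * p n))
      · obtain ⟨P, hP⟩ := hm
        rw [hP.tprod_eq]
        have hT : Tendsto (fun s : Finset ℕ => ∏ n ∈ s, (1 + z / (a n:ℂ)) ^ (2 * p n))
            atTop (nhds P) := hP
        have hband : ∀ s : Finset ℕ,
            ‖∏ n ∈ s, (1 + z / (a n:ℂ)) ^ (2 * p n)‖ ≤ Real.exp S := by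
          intro s
          rw [norm_prod]
          calc ∏ n ∈ s, ‖(1 + z / (a n:ℂ)) ^ (2 * p n)‖
              ≤ ∏ n ∈ s, (1 + r / a n) ^ (2 * p n) :=
                Finset.prod_le_prod (fun n _ => norm_nonneg _) (fun n _ => hfac n)
            _ = Real.exp (∑ n ∈ s, L n) := by
                rw [Real.exp_sum]; exact Finset.prod_congr rfl (fun n _ => (hexpL n).symm)
            _ ≤ Real.exp S := by
                rw [hSdef]
                exact Real.exp_le_exp.2 (Summable.sum_le_tsum s (fun n _ => hLnn n) hLsum)
        have hle := le_of_tendsto hT.norm (Filter.Eventually.of_forall hband)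
        exact hle
      · rw [tprod_eq_one_of_not_multipliable hm, norm_one]
        exact Real.one_le_exp hS0
    exact mul_le_mul_of_nonneg_left hprod (pow_nonneg hr0.le 3)
  have hmax : maxMod f r = ‖f (r:ℂ)‖ := by
    apply IsGreatest.csSup_eq
    constructor
    · exact ⟨(r:ℂ), by
        rw [Metric.mem_sphere, Complex.dist_eq, sub_zero, Complex.norm_real, Real.norm_of_nonneg hr0.le], rfl⟩
    · rintro x ⟨z, hz, rfl⟩
      simp only
      rw [hfr]
      exact hub z hz
  -- numeric form of r^3
  have hr3 : (r:ℝ)^(3:ℕ) = Real.exp (3 * Real.log r) := by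
    rw [show (3:ℝ) * Real.log r = ((3:ℕ):ℝ) * Real.log r by norm_num, Real.exp_nat_mul,
      Real.exp_log hr0]
  have hbkeq : b k = a k ^ δ k := rfl
  -- second conjunct
  have hconj2 : ‖f (r:ℂ)‖
      < Real.exp 2 * r ^ A * (1 + r / a k) ^ (a k ^ δ k) := by
    have hx : (0:ℝ) < 1 + r / a k := by linarith [hx1 k]
    rw [hfr, hr3, Real.rpow_def_of_pos hr0 A, Real.rpow_def_of_pos hx (a k ^ δ k),
      ← Real.exp_add, ← Real.exp_add, ← Real.exp_add]
    apply Real.exp_lt_exp.2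
    have h4lgr : 4 * Real.log r ≤ (7/15) * A * Real.log r := by nlinarith [hA256, hlgr0]
    have hcomm : Real.log (1 + r / a k) * (a k ^ δ k) = b k * Real.log (1 + r / a k) := by
      rw [hbkeq]; ring
    rw [hcomm]
    nlinarith [hStot, hlgr6]
  -- third conjunct
  have hρA : A ≤ r ^ δ k := hlow
  have hρ256 : (256:ℝ) ≤ r ^ δ k := hA256.trans hρA
  have hconj3 : ‖f (r:ℂ)‖ < Real.exp 3 * r ^ (r ^ δ k) := by
    rw [hfr, hr3, Real.rpow_def_of_pos hr0 (r ^ δ k), ← Real.exp_add, ← Real.exp_add]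
    apply Real.exp_lt_exp.2
    have h4lgr : 4 * Real.log r ≤ (7/15) * (r ^ δ k) * Real.log r := by
      nlinarith [hρ256, hlgr0]
    have h8 : (8/15) * A * Real.log r ≤ (8/15) * (r ^ δ k) * Real.log r := by
      nlinarith [hρA, hlgr0]
    nlinarith [hStot, hlgr6, hB1]
  refine ⟨hmax, hconj2, hconj3, ?_⟩
  -- fourth conjunct
  rw [hmax, hfr]
  set M := r^(3:ℕ) * Real.exp S with hMdef
  have hM0 : 0 < M := by rw [hMdef]; exact mul_pos (pow_pos hr0 3) (Real.exp_pos S)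
  have hMlow : Real.exp (3 * Real.log r) ≤ M := by
    rw [hMdef, ← hr3]
    nlinarith [Real.one_le_exp hS0, pow_pos hr0 3]
  have hlogMlow : 3 * Real.log r ≤ Real.log M := by
    calc 3 * Real.log r = Real.log (Real.exp (3 * Real.log r)) := (Real.log_exp _).symm
      _ ≤ Real.log M := Real.log_le_log (Real.exp_pos _) hMlow
  have hlogM0 : 0 < Real.log M := by linarith
  have hMup : M < Real.exp (3 + Real.log r * (r ^ δ k)) := by
    have h1 : M < Real.exp 3 * r ^ (r ^ δ k) := by rw [← hfr]; exact hconj3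
    rwa [Real.exp_add, ← Real.rpow_def_of_pos hr0]
  have hlogMup : Real.log M < 3 + Real.log r * (r ^ δ k) := by
    calc Real.log M < Real.log (Real.exp (3 + Real.log r * (r ^ δ k))) :=
        Real.log_lt_log hM0 hMup
      _ = 3 + Real.log r * (r ^ δ k) := Real.log_exp _
  have h3b : 3 + Real.log r * (r ^ δ k) ≤ (r ^ δ k) * Real.log r * Real.log r := by
    nlinarith [hρ256, hlgr6]
  have hρ0 : 0 < r ^ δ k := Real.rpow_pos_of_pos hr0 _
  have hexpand : Real.log ((r ^ δ k) * Real.log r * Real.log r)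
      = δ k * Real.log r + Real.log (Real.log r) + Real.log (Real.log r) := by
    rw [Real.log_mul (mul_ne_zero (ne_of_gt hρ0) (ne_of_gt hlgr0)) (ne_of_gt hlgr0),
      Real.log_mul (ne_of_gt hρ0) (ne_of_gt hlgr0), Real.log_rpow hr0]
  have hfin : Real.log (Real.log M) ≤ δ k * Real.log r + 2 * Real.log (Real.log r) := by
    have h6 : Real.log (Real.log M) ≤ Real.log ((r ^ δ k) * Real.log r * Real.log r) :=
      Real.log_le_log hlogM0 (by linarith)
    rw [hexpand] at h6; linarith
  have hstep : Real.log (Real.log M) / Real.log r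
      ≤ (δ k * Real.log r + 2 * Real.log (Real.log r)) / Real.log r :=
    div_le_div_of_nonneg_right hfin hlgr0.le
  calc Real.log (Real.log M) / Real.log r
      ≤ (δ k * Real.log r + 2 * Real.log (Real.log r)) / Real.log r := hstep
    _ = δ k + 2 * Real.log (Real.log r) / Real.log r := by
        rw [add_div, mul_div_cancel_right₀ _ (ne_of_gt hlgr0)]
end
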